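/- arXiv:1203.2752 — 4 statements merged into one kernel-verified Lean document; each statement's English description precedes it below -/
import Mathlib

section
/- Let Γ be a finite simple graph with vertex set S, and let G be the right-angled Coxeter group on Γ. Define a deterministic finite automaton D over the alphabet S whose states are the nonempty cliques of Γ together with a start state ∅ and a fail state ρ; the accept states are all states other than ρ; the transition function μ is given by μ(σ, v) = {v} ∪ (Star(v) ∩ σ) whenever σ ≠ ρ and v ∉ σ, and μ(σ, v) = ρ whenever v ∈ σ or σ = ρ. Then D accepts a word w ∈ S* if and only if w is a geodesic word for (G, S). -/
/-- The relators of the right-angled Coxeter group on a simple graph `Γ`: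
squares of generators and squares of products of adjacent generators. -/
def racgRels {V : Type*} (Γ : SimpleGraph V) : Set (FreeGroup V) :=
  {r | (∃ s : V, r = FreeGroup.of s ^ 2) ∨
       (∃ s t : V, Γ.Adj s t ∧ r = (FreeGroup.of s * FreeGroup.of t) ^ 2)}

/-- The natural projection from words over the vertex set to the
right-angled Coxeter group. -/
def racgPi {V : Type*} (Γ : SimpleGraph V) (w : List V) :
    PresentedGroup (racgRels Γ) :=
  (w.map fun s => (PresentedGroup.of s : PresentedGroup (racgRels Γ))).prod

/-- A word over `S` is geodesic if its length equals the word length of the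
element it represents, i.e. no shorter word represents the same element. -/
def racgIsGeodesic {V : Type*} (Γ : SimpleGraph V) (w : List V) : Prop :=
  ∀ w' : List V, racgPi Γ w' = racgPi Γ w → w.length ≤ w'.length

/-- `Star(v) = {v} ∪ {u : u adjacent to v}` as a finset. -/
def starFinset {V : Type*} [Fintype V] [DecidableEq V] (Γ : SimpleGraph V)
    [DecidableRel Γ.Adj] (v : V) : Finset V :=
  insert v (Γ.neighborFinset v)

/-- The transition function of the automaton `D`.  States are `Option (Finset V)`,
where `none` is the fail state `ρ`, `some ∅` is the start state and the other
reachable states `some σ` correspond to the nonempty cliques `σ` of `Γ`.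
We have `μ(σ, v) = {v} ∪ (Star(v) ∩ σ)` if `σ ≠ ρ` and `v ∉ σ`, and
`μ(σ, v) = ρ` otherwise. -/
def racgMu {V : Type*} [Fintype V] [DecidableEq V] (Γ : SimpleGraph V)
    [DecidableRel Γ.Adj] : Option (Finset V) → V → Option (Finset V)
  | none, _ => none
  | some σ, v => if v ∈ σ then none else some (insert v (starFinset Γ v ∩ σ))

namespace RacgAux

variable {V : Type*} (Γ : SimpleGraph V)

/-- `v` can be shuffled to the end of `w`. -/
def Tail (v : V) (w : List V) : Prop :=
  ∃ a b : List V, w = a ++ v :: b ∧ ∀ u ∈ b, Γ.Adj u v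

/-- `w` contains a cancellable pair. -/
def NonRed (w : List V) : Prop :=
  ∃ (x : V) (a b c : List V), w = a ++ x :: (b ++ x :: c) ∧ ∀ u ∈ b, Γ.Adj u x

def Red (w : List V) : Prop := ¬ NonRed Γ w

variable {Γ}

lemma red_nil : Red Γ ([] : List V) := by
  rintro ⟨x, a, b, c, h, -⟩
  simp at h

lemma not_tail_nil (v : V) : ¬ Tail Γ v [] := by
  rintro ⟨a, b, h, -⟩
  simp at h

lemma tail_unique {v : V} {a₁ b₁ a₂ b₂ : List V}
    (h : a₁ ++ v :: b₁ = a₂ ++ v :: b₂)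
    (h₁ : ∀ u ∈ b₁, Γ.Adj u v) (h₂ : ∀ u ∈ b₂, Γ.Adj u v) :
    a₁ = a₂ ∧ b₁ = b₂ := by
  rcases List.append_eq_append_iff.mp h with ⟨k, hk, hk'⟩ | ⟨k, hk, hk'⟩
  · cases k with
    | nil => simp at hk; simp at hk'; exact ⟨hk.symm, hk'⟩
    | cons x k =>
      obtain ⟨rfl, hb⟩ : v = x ∧ b₁ = k ++ v :: b₂ := by
        simpa using hk'
      exact absurd (h₁ v (by simp [hb])) (Γ.irrefl)
  · cases k with
    | nil => simp at hk; simp at hk'; exact ⟨hk, hk'.symm⟩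
    | cons x k =>
      obtain ⟨rfl, hb⟩ : v = x ∧ b₂ = k ++ v :: b₁ := by
        simpa using hk'
      exact absurd (h₂ v (by simp [hb])) (Γ.irrefl)

lemma nonRed_append {w : List V} (v : V) (h : NonRed Γ w) : NonRed Γ (w ++ [v]) := by
  obtain ⟨x, a, b, c, rfl, hb⟩ := h
  exact ⟨x, a, b, c ++ [v], by simp, hb⟩

lemma red_append_iff {w : List V} {v : V} :
    Red Γ (w ++ [v]) ↔ Red Γ w ∧ ¬ Tail Γ v w := by
  constructor
  · intro h
    refine ⟨fun hn => h (nonRed_append v hn), fun ht => ?_⟩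
    obtain ⟨a, b, rfl, hb⟩ := ht
    exact h ⟨v, a, b, [], by simp, hb⟩
  · rintro ⟨hr, ht⟩ ⟨x, a, b, c, heq, hb⟩
    rcases List.eq_nil_or_concat c with rfl | ⟨c', y, rfl⟩
    · rw [show a ++ x :: (b ++ [x]) = (a ++ x :: b) ++ [x] by simp] at heq
      obtain ⟨rfl, hvx⟩ := List.append_inj' heq rfl
      obtain rfl : v = x := by simpa using hvx
      exact ht ⟨a, b, rfl, hb⟩
    · rw [show a ++ x :: (b ++ x :: (c'.concat y)) = (a ++ x :: (b ++ x :: c')) ++ [y] by simp] at heq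
      obtain ⟨rfl, -⟩ := List.append_inj' heq rfl
      exact hr ⟨x, a, b, c', rfl, hb⟩

lemma red_erase {w a b : List V} {v : V} (hw : Red Γ w) (heq : w = a ++ v :: b)
    (hb : ∀ u ∈ b, Γ.Adj u v) : Red Γ (a ++ b) := by
  rintro ⟨x, p, q, r, hpq, hq⟩
  apply hw
  subst heq
  rcases List.append_eq_append_iff.mp hpq with ⟨k, rfl, hk'⟩ | ⟨k, rfl, hk'⟩
  · -- b = k ++ x :: (q ++ x :: r) : both occurrences inside b
    subst hk'
    exact ⟨x, a ++ v :: k, q, r, by simp, hq⟩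
  · -- a = p ++ k, x :: (q ++ x :: r) = k ++ b
    cases k with
    | nil =>
      simp only [List.nil_append] at hk' ⊢
      exact ⟨x, p ++ [v], q, r, by simp [← hk'], hq⟩
    | cons z k' =>
      obtain ⟨rfl, hk2⟩ : x = z ∧ q ++ x :: r = k' ++ b := by simpa using hk'
      rcases List.append_eq_append_iff.mp hk2 with ⟨m, rfl, hm⟩ | ⟨m, rfl, hm⟩
      · cases m with
        | nil =>
          simp only [List.nil_append] at hm
          refine ⟨x, p, q ++ [v], r, by simp [← hm], ?_⟩
          intro u hu
          rcases List.mem_append.mp hu with hu | hu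
          · exact hq u hu
          · have hxv : Γ.Adj x v := hb x (by simp [← hm])
            obtain rfl : u = v := by simpa using hu
            exact hxv.symm
        | cons z' m' =>
          obtain ⟨rfl, hr'⟩ : x = z' ∧ r = m' ++ b := by simpa using hm
          exact ⟨x, p, q, m' ++ v :: b, by simp [hr'], hq⟩
      · -- q = k' ++ m, b = m ++ x :: r
        subst hm
        refine ⟨x, p, k' ++ v :: m, r, by simp, ?_⟩
        intro u hu
        simp only [List.mem_append, List.mem_cons] at hu
        rcases hu with hu | rfl | hu
        · exact hq u (by simp [hu])
        · exact (hb x (by simp)).symm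
        · exact hq u (by simp [hu])

section Group

lemma pi_nil : racgPi Γ ([] : List V) = 1 := rfl

lemma pi_append (w₁ w₂ : List V) :
    racgPi Γ (w₁ ++ w₂) = racgPi Γ w₁ * racgPi Γ w₂ := by
  simp [racgPi]

lemma pi_cons (v : V) (w : List V) :
    racgPi Γ (v :: w) = PresentedGroup.of v * racgPi Γ w := by
  simp [racgPi]

lemma pi_singleton (v : V) : racgPi Γ [v] = PresentedGroup.of v := by
  simp [racgPi]

lemma rel_one {r : FreeGroup V} (h : r ∈ racgRels Γ) :
    (QuotientGroup.mk r : PresentedGroup (racgRels Γ)) = 1 :=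
  (QuotientGroup.eq_one_iff r).mpr (Subgroup.subset_normalClosure h)

lemma of_mul_self (v : V) :
    (PresentedGroup.of v : PresentedGroup (racgRels Γ)) * PresentedGroup.of v = 1 := by
  have := rel_one (Γ := Γ) (Or.inl ⟨v, rfl⟩)
  rw [sq] at this
  exact this

lemma of_inv (v : V) :
    (PresentedGroup.of v : PresentedGroup (racgRels Γ))⁻¹ = PresentedGroup.of v :=
  inv_eq_of_mul_eq_one_right (of_mul_self v)

lemma of_comm {s t : V} (h : Γ.Adj s t) :
    (PresentedGroup.of s : PresentedGroup (racgRels Γ)) * PresentedGroup.of t =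
      PresentedGroup.of t * PresentedGroup.of s := by
  have h1 := rel_one (Γ := Γ) (Or.inr ⟨s, t, h, rfl⟩)
  rw [sq] at h1
  have h2 : ((PresentedGroup.of s : PresentedGroup (racgRels Γ)) * PresentedGroup.of t) *
      (PresentedGroup.of s * PresentedGroup.of t) = 1 := by exact h1
  have h3 := inv_eq_of_mul_eq_one_right h2
  rw [mul_inv_rev, of_inv, of_inv] at h3
  exact h3.symm

lemma of_comm_pi {v : V} {b : List V} (hb : ∀ u ∈ b, Γ.Adj u v) :
    (PresentedGroup.of v : PresentedGroup (racgRels Γ)) * racgPi Γ b =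
      racgPi Γ b * PresentedGroup.of v := by
  induction b with
  | nil => simp [pi_nil]
  | cons u b ih =>
    rw [pi_cons, ← mul_assoc, of_comm (hb u (by simp)).symm, mul_assoc,
      ih (fun x hx => hb x (by simp [hx])), mul_assoc]

lemma pi_erase {x : V} {a b c : List V} (hb : ∀ u ∈ b, Γ.Adj u x) :
    racgPi Γ (a ++ x :: (b ++ x :: c)) = racgPi Γ (a ++ (b ++ c)) := by
  rw [pi_append, pi_append, pi_cons, pi_append, pi_cons, pi_append]
  rw [← mul_assoc (PresentedGroup.of x), of_comm_pi hb,
    mul_assoc (racgPi Γ b) (PresentedGroup.of x),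
    ← mul_assoc (PresentedGroup.of x) (PresentedGroup.of x), of_mul_self, one_mul]

lemma pi_reverse (w : List V) : racgPi Γ w.reverse = (racgPi Γ w)⁻¹ := by
  induction w with
  | nil => simp [pi_nil]
  | cons v t ih =>
    rw [List.reverse_cons, pi_append, ih, pi_cons, pi_cons, pi_nil, mul_one, mul_inv_rev, of_inv]

end Group

section Step

open Classical in
/-- Multiply a reduced word on the right by `v`: erase the cancellable
occurrence of `v` if there is one, otherwise append `v`. -/
noncomputable def stepFun (Γ : SimpleGraph V) (v : V) (l : List V) : List V :=
  if h : Tail Γ v l then h.choose ++ h.choose_spec.choose else l ++ [v]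

lemma stepFun_erase {v : V} {l a b : List V} (heq : l = a ++ v :: b)
    (hb : ∀ u ∈ b, Γ.Adj u v) : stepFun Γ v l = a ++ b := by
  have h : Tail Γ v l := ⟨a, b, heq, hb⟩
  rw [stepFun, dif_pos h]
  obtain ⟨h1, h2⟩ := tail_unique (Γ := Γ)
    (h.choose_spec.choose_spec.1.symm.trans heq) h.choose_spec.choose_spec.2 hb
  exact congr_arg₂ (· ++ ·) h1 h2

lemma stepFun_append {v : V} {l : List V} (h : ¬ Tail Γ v l) :
    stepFun Γ v l = l ++ [v] := dif_neg h

lemma step_red {v : V} {l : List V} (hl : Red Γ l) : Red Γ (stepFun Γ v l) := by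
  by_cases h : Tail Γ v l
  · obtain ⟨a, b, heq, hb⟩ := h
    rw [stepFun_erase heq hb]
    exact red_erase hl heq hb
  · rw [stepFun_append h]
    exact red_append_iff.mpr ⟨hl, h⟩

lemma step_pi (v : V) (l : List V) :
    racgPi Γ (stepFun Γ v l) = racgPi Γ l * PresentedGroup.of v := by
  by_cases h : Tail Γ v l
  · obtain ⟨a, b, heq, hb⟩ := h
    rw [stepFun_erase heq hb, heq, pi_append, pi_append, pi_cons, mul_assoc,
      mul_assoc, ← of_comm_pi hb, ← mul_assoc (PresentedGroup.of v), of_mul_self, one_mul]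
  · rw [stepFun_append h, pi_append, pi_singleton]

/-- Not-`Tail` after erasing the cancellable occurrence (for reduced words). -/
lemma not_tail_erase {v : V} {a b : List V} (hr : Red Γ (a ++ v :: b))
    (hb : ∀ u ∈ b, Γ.Adj u v) : ¬ Tail Γ v (a ++ b) := by
  rintro ⟨c, d, heq, hd⟩
  rcases List.append_eq_append_iff.mp heq with ⟨k, rfl, hk⟩ | ⟨k, rfl, hk⟩
  · -- b = k ++ v :: d : v ∈ b, contradiction with adjacency irreflexivity
    exact Γ.irrefl (hb v (by simp [hk]))
  · cases k with
    | nil =>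
      simp only [List.nil_append] at hk
      exact Γ.irrefl (hb v (by simp [← hk]))
    | cons z k' =>
      obtain ⟨rfl, hk2⟩ : v = z ∧ d = k' ++ b := by simpa using hk
      exact hr ⟨v, c, k', b, by simp, fun u hu => hd u (by simp [hk2, hu])⟩

end Step

section Swap

variable (Γ) in
/-- Swapping two adjacent (commuting) consecutive letters. -/
def SwapRel (w₁ w₂ : List V) : Prop :=
  ∃ (a b : List V) (x y : V), Γ.Adj x y ∧ w₁ = a ++ x :: y :: b ∧ w₂ = a ++ y :: x :: b

lemma swapRel_symm {w₁ w₂ : List V} (h : SwapRel Γ w₁ w₂) : SwapRel Γ w₂ w₁ := by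
  obtain ⟨a, b, x, y, hxy, h1, h2⟩ := h
  exact ⟨a, b, y, x, hxy.symm, h2, h1⟩

lemma swapRel_length {w₁ w₂ : List V} (h : SwapRel Γ w₁ w₂) :
    w₁.length = w₂.length := by
  obtain ⟨a, b, x, y, -, rfl, rfl⟩ := h
  simp

lemma swapRel_pi {w₁ w₂ : List V} (h : SwapRel Γ w₁ w₂) :
    racgPi Γ w₁ = racgPi Γ w₂ := by
  obtain ⟨a, b, x, y, hxy, rfl, rfl⟩ := h
  rw [pi_append, pi_append, pi_cons, pi_cons, pi_cons, pi_cons,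
    ← mul_assoc (PresentedGroup.of x), of_comm hxy, mul_assoc]

lemma swapRel_tail {w₁ w₂ : List V} {v : V} (h : SwapRel Γ w₁ w₂)
    (ht : Tail Γ v w₁) : Tail Γ v w₂ := by
  obtain ⟨p, q, x, y, hxy, rfl, rfl⟩ := h
  obtain ⟨a, b, heq, hb⟩ := ht
  -- heq : p ++ x :: y :: q = a ++ v :: b
  rcases List.append_eq_append_iff.mp heq with ⟨k, rfl, hk⟩ | ⟨k, hpk, hk⟩
  · -- a = p ++ k, hk : x :: y :: q = k ++ v :: b
    cases k with
    | nil =>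
      obtain ⟨h1, h2⟩ : x = v ∧ y :: q = b := by simpa using hk
      refine ⟨p ++ [y], q, by simp [h1], fun u hu => hb u (by simp [← h2, hu])⟩
    | cons x' k' =>
      obtain ⟨h1, hk2⟩ : x = x' ∧ y :: q = k' ++ v :: b := by simpa using hk
      cases k' with
      | nil =>
        obtain ⟨h2, h3⟩ : y = v ∧ q = b := by simpa using hk2
        refine ⟨p, x :: b, by simp [h2, h3], ?_⟩
        intro u hu
        rcases List.mem_cons.mp hu with rfl | hu
        · exact h2 ▸ hxy
        · exact hb u hu
      | cons y' k'' =>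
        obtain ⟨h2, h3⟩ : y = y' ∧ q = k'' ++ v :: b := by simpa using hk2
        exact ⟨p ++ y :: x :: k'', b, by simp [h3], hb⟩
  · -- p = a ++ k, hk : v :: b = k ++ x :: y :: q
    cases k with
    | nil =>
      simp only [List.nil_append] at hpk hk
      obtain ⟨h1, h2⟩ : v = x ∧ b = y :: q := by simpa using hk
      refine ⟨a ++ [y], q, by simp [hpk, ← h1], fun u hu => hb u (by simp [h2, hu])⟩
    | cons v' k' =>
      obtain ⟨h1, h2⟩ : v = v' ∧ b = k' ++ x :: y :: q := by simpa using hk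
      refine ⟨a, k' ++ y :: x :: q, by simp [hpk, ← h1], ?_⟩
      intro u hu
      apply hb
      rw [h2]
      simp only [List.mem_append, List.mem_cons] at hu ⊢
      tauto

/-- A word is non-reduced iff some letter has an earlier cancellable copy. -/
lemma nonRed_iff {w : List V} :
    NonRed Γ w ↔ ∃ (z : V) (A C : List V), w = A ++ z :: C ∧ Tail Γ z A := by
  constructor
  · rintro ⟨x, a, b, c, rfl, hb⟩
    exact ⟨x, a ++ x :: b, c, by simp, a, b, rfl, hb⟩
  · rintro ⟨z, A, C, rfl, a, b, rfl, hb⟩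
    exact ⟨z, a, b, C, by simp, hb⟩

lemma tail_concat_self_aux {z y : V} {p a b : List V}
    (hab : p ++ [y] = a ++ z :: b) (hb : ∀ u ∈ b, Γ.Adj u z) (hzy : z ≠ y) :
    Tail Γ z p := by
  rcases List.eq_nil_or_concat b with rfl | ⟨b', y', rfl⟩
  · obtain ⟨-, h2⟩ := List.append_inj' hab rfl
    exact absurd (by simpa using h2 : y = z).symm hzy
  · rw [show a ++ z :: (b'.concat y') = (a ++ z :: b') ++ [y'] by simp] at hab
    obtain ⟨h1, -⟩ := List.append_inj' hab rfl
    exact ⟨a, b', h1, fun u hu => hb u (by simp [hu])⟩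

lemma swapRel_red {w₁ w₂ : List V} (h : SwapRel Γ w₁ w₂) (hr : Red Γ w₁) :
    Red Γ w₂ := by
  intro hnr
  apply hr
  obtain ⟨p, q, x, y, hxy, rfl, rfl⟩ := h
  rw [nonRed_iff] at hnr ⊢
  obtain ⟨z, A, C, heq, hA⟩ := hnr
  -- heq : p ++ y :: x :: q = A ++ z :: C
  rcases List.append_eq_append_iff.mp heq with ⟨k, rfl, hk⟩ | ⟨k, hpk, hk⟩
  · -- A = p ++ k, hk : y :: x :: q = k ++ z :: C
    cases k with
    | nil =>
      obtain ⟨h1, h2⟩ : y = z ∧ x :: q = C := by simpa using hk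
      -- z occurs as the y of the swap; in w₁ it sits after x: use A' = p ++ [x]
      refine ⟨z, p ++ [x], q, by simp [← h1, ← h2], ?_⟩
      obtain ⟨a, b, hab, hb⟩ := hA
      simp only [List.append_nil] at hab
      refine ⟨a, b ++ [x], by simp [hab], ?_⟩
      intro u hu
      rcases List.mem_append.mp hu with hu | hu
      · exact hb u hu
      · obtain rfl : u = x := by simpa using hu
        simp_all [SimpleGraph.adj_comm]
    | cons y' k' =>
      obtain ⟨h1, hk2⟩ : y = y' ∧ x :: q = k' ++ z :: C := by simpa using hk
      cases k' with
      | nil =>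
        obtain ⟨h2, h3⟩ : x = z ∧ q = C := by simpa using hk2
        -- A = p ++ [y], z occurs as the x of the swap; in w₁: p ++ z :: y :: q
        refine ⟨z, p, y :: q, by simp [← h2, ← h3], ?_⟩
        obtain ⟨a, b, hab, hb⟩ := hA
        rw [← h1] at hab
        exact tail_concat_self_aux hab hb (fun hzy => Γ.irrefl (hzy ▸ h2 ▸ hxy))
      | cons x' k'' =>
        obtain ⟨h2, h3⟩ : x = x' ∧ q = k'' ++ z :: C := by simpa using hk2
        subst h1; subst h2; subst h3
        -- z occurs in q after the swap
        refine ⟨z, p ++ x :: y :: k'', C, by simp, ?_⟩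
        exact swapRel_tail (⟨p, k'', y, x, hxy.symm, rfl, rfl⟩ : SwapRel Γ _ _) hA
  · -- p = A ++ k, hk : z :: C = k ++ y :: x :: q : z occurs inside p, before the swap
    cases k with
    | nil =>
      simp only [List.nil_append] at hpk hk
      obtain ⟨h1, h2⟩ : z = y ∧ C = x :: q := by simpa using hk
      refine ⟨z, A ++ [x], q, by simp [hpk, ← h1, h2], ?_⟩
      obtain ⟨a, b, hab, hb⟩ := hA
      refine ⟨a, b ++ [x], by simp [hab], ?_⟩
      intro u hu
      rcases List.mem_append.mp hu with hu | hu
      · exact hb u hu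
      · obtain rfl : u = x := by simpa using hu
        simp_all [SimpleGraph.adj_comm]
    | cons z' k' =>
      obtain ⟨h1, h2⟩ : z = z' ∧ C = k' ++ y :: x :: q := by simpa using hk
      refine ⟨z, A, k' ++ x :: y :: q, by simp [hpk, ← h1, h2], hA⟩

lemma tail_append_iff {u v : V} {w : List V} :
    Tail Γ u (w ++ [v]) ↔ u = v ∨ (Γ.Adj v u ∧ Tail Γ u w) := by
  constructor
  · rintro ⟨a, b, heq, hb⟩
    rcases List.eq_nil_or_concat b with rfl | ⟨b', y, rfl⟩
    · obtain ⟨-, h2⟩ := List.append_inj' heq rfl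
      left; simpa using h2.symm
    · rw [show a ++ u :: (b'.concat y) = (a ++ u :: b') ++ [y] by simp] at heq
      obtain ⟨rfl, h2⟩ := List.append_inj' heq rfl
      obtain rfl : v = y := by simpa using h2
      exact Or.inr ⟨hb v (by simp), a, b', rfl, fun x hx => hb x (by simp [hx])⟩
  · rintro (rfl | ⟨hadj, a, b, rfl, hb⟩)
    · exact ⟨w, [], by simp, by simp⟩
    · refine ⟨a, b ++ [v], by simp, ?_⟩
      intro x hx
      rcases List.mem_append.mp hx with hx | hx
      · exact hb x hx
      · obtain rfl : x = v := by simpa using hx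
        exact hadj

end Swap

section Quot

variable (Γ) in
/-- The swap relation on reduced words. -/
def Rel (l m : {x : List V // Red Γ x}) : Prop := SwapRel Γ l.1 m.1

lemma mkEq {l m : {x : List V // Red Γ x}} (h : l.1 = m.1) :
    Quot.mk (Rel Γ) l = Quot.mk (Rel Γ) m :=
  congrArg (Quot.mk (Rel Γ)) (Subtype.ext h)

variable (Γ) in
noncomputable def stepR (v : V) (l : {x : List V // Red Γ x}) : {x : List V // Red Γ x} :=
  ⟨stepFun Γ v l.1, step_red l.2⟩

lemma mk_stepR_eq {v : V} {l : {x : List V // Red Γ x}} {w : List V}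
    (h : stepFun Γ v l.1 = w) :
    Quot.mk (Rel Γ) (stepR Γ v l) = Quot.mk (Rel Γ) ⟨w, h ▸ step_red l.2⟩ :=
  mkEq h

lemma step_swap {v : V} {l m : {x : List V // Red Γ x}} (h : Rel Γ l m) :
    Quot.mk (Rel Γ) (stepR Γ v l) = Quot.mk (Rel Γ) (stepR Γ v m) := by
  obtain ⟨l, hl⟩ := l
  obtain ⟨m, hm⟩ := m
  simp only [Rel] at h
  by_cases ht : Tail Γ v l
  · have htm : Tail Γ v m := swapRel_tail h ht
    obtain ⟨p, q, x, y, hxy, rfl, rfl⟩ := h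
    obtain ⟨a, b, heq, hb⟩ := ht
    -- heq : p ++ x :: y :: q = a ++ v :: b
    rcases List.append_eq_append_iff.mp heq with ⟨k, rfl, hk⟩ | ⟨k, hpk, hk⟩
    · -- a = p ++ k, hk : x :: y :: q = k ++ v :: b
      cases k with
      | nil =>
        obtain ⟨h1, h2⟩ : x = v ∧ y :: q = b := by simpa using hk
        have e1 : stepFun Γ v (p ++ x :: y :: q) = p ++ y :: q :=
          stepFun_erase (by rw [h1]) (fun u hu => hb u (h2 ▸ hu))
        have e2 : stepFun Γ v (p ++ y :: x :: q) = p ++ y :: q :=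
          (stepFun_erase (l := p ++ y :: x :: q) (a := p ++ [y]) (b := q)
            (by simp [h1]) (fun u hu => hb u (by rw [← h2]; simp [hu]))).trans (by simp)
        exact (mk_stepR_eq e1).trans (mk_stepR_eq e2).symm
      | cons x' k' =>
        obtain ⟨h1, hk2⟩ : x = x' ∧ y :: q = k' ++ v :: b := by simpa using hk
        cases k' with
        | nil =>
          obtain ⟨h2, h3⟩ : y = v ∧ q = b := by simpa using hk2
          have e1 : stepFun Γ v (p ++ x :: y :: q) = p ++ x :: q :=
            (stepFun_erase (l := p ++ x :: y :: q) (a := p ++ [x]) (b := q)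
              (by simp [h2]) (fun u hu => hb u (h3 ▸ hu))).trans (by simp)
          have e2 : stepFun Γ v (p ++ y :: x :: q) = p ++ x :: q :=
            stepFun_erase (by rw [h2]) ?_
          · exact (mk_stepR_eq e1).trans (mk_stepR_eq e2).symm
          · intro u hu
            rcases List.mem_cons.mp hu with rfl | hu
            · exact h2 ▸ hxy
            · exact hb u (h3 ▸ hu)
        | cons y' k'' =>
          obtain ⟨h2, h3⟩ : y = y' ∧ q = k'' ++ v :: b := by simpa using hk2
          subst h1; subst h2; subst h3
          have e1 : stepFun Γ v (p ++ x :: y :: (k'' ++ v :: b)) = (p ++ x :: y :: k'') ++ b :=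
            stepFun_erase (by simp) hb
          have e2 : stepFun Γ v (p ++ y :: x :: (k'' ++ v :: b)) = (p ++ y :: x :: k'') ++ b :=
            stepFun_erase (by simp) hb
          refine (mk_stepR_eq e1).trans (Eq.trans ?_ (mk_stepR_eq e2).symm)
          exact Quot.sound ⟨p, k'' ++ b, x, y, hxy, by simp, by simp⟩
    · -- p = a ++ k, hk : v :: b = k ++ x :: y :: q
      cases k with
      | nil =>
        simp only [List.append_nil] at hpk
        simp only [List.nil_append] at hk
        obtain ⟨h1, h2⟩ : v = x ∧ b = y :: q := by simpa using hk
        have e1 : stepFun Γ v (p ++ x :: y :: q) = p ++ y :: q :=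
          stepFun_erase (by rw [hpk, h1]) (fun u hu => hb u (by rw [h2]; exact hu))
        have e2 : stepFun Γ v (p ++ y :: x :: q) = p ++ y :: q :=
          (stepFun_erase (l := p ++ y :: x :: q) (a := p ++ [y]) (b := q)
            (by simp [hpk, ← h1]) (fun u hu => hb u (by simp [h2, hu]))).trans (by simp)
        exact (mk_stepR_eq e1).trans (mk_stepR_eq e2).symm
      | cons v' k' =>
        obtain ⟨h1, h2⟩ : v = v' ∧ b = k' ++ x :: y :: q := by simpa using hk
        subst h1; subst h2; subst hpk
        have hb' : ∀ u ∈ k' ++ y :: x :: q, Γ.Adj u v := by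
          intro u hu
          apply hb
          simp only [List.mem_append, List.mem_cons] at hu ⊢
          tauto
        have e1 : stepFun Γ v ((a ++ v :: k') ++ x :: y :: q) = a ++ (k' ++ x :: y :: q) :=
          stepFun_erase (by simp) hb
        have e2 : stepFun Γ v ((a ++ v :: k') ++ y :: x :: q) = a ++ (k' ++ y :: x :: q) :=
          stepFun_erase (by simp) hb'
        refine (mk_stepR_eq e1).trans (Eq.trans ?_ (mk_stepR_eq e2).symm)
        exact Quot.sound ⟨a ++ k', q, x, y, hxy, by simp, by simp⟩
  · have htm : ¬ Tail Γ v m := fun h' => ht (swapRel_tail (swapRel_symm h) h')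
    have e1 := stepFun_append (Γ := Γ) (l := l) (v := v) ht
    have e2 := stepFun_append (Γ := Γ) (l := m) (v := v) htm
    refine (mk_stepR_eq e1).trans (Eq.trans ?_ (mk_stepR_eq e2).symm)
    obtain ⟨p, q, x, y, hxy, rfl, rfl⟩ := h
    exact Quot.sound ⟨p, q ++ [v], x, y, hxy, by simp, by simp⟩

end Quot

section Moves

lemma bubble : ∀ (b a : List V) (v : V), (∀ u ∈ b, Γ.Adj u v) →
    ∀ (hr : Red Γ (a ++ v :: b)) (hr2 : Red Γ (a ++ b ++ [v])),
    Quot.mk (Rel Γ) ⟨a ++ v :: b, hr⟩ = Quot.mk (Rel Γ) ⟨a ++ b ++ [v], hr2⟩ := by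
  intro b
  induction b with
  | nil => intro a v _ hr hr2; exact mkEq (by simp)
  | cons u b' ih =>
    intro a v hb hr hr2
    have hswap : SwapRel Γ (a ++ v :: u :: b') (a ++ u :: v :: b') :=
      ⟨a, b', v, u, (hb u (by simp)).symm, rfl, rfl⟩
    have red2 : Red Γ (a ++ u :: v :: b') := swapRel_red hswap hr
    have red2' : Red Γ ((a ++ [u]) ++ v :: b') := by simpa using red2
    have red3 : Red Γ ((a ++ [u]) ++ b' ++ [v]) := by simpa using hr2
    refine (Quot.sound (show Rel Γ ⟨a ++ v :: u :: b', hr⟩ ⟨a ++ u :: v :: b', red2⟩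
      from hswap)).trans ?_
    refine (mkEq (l := ⟨a ++ u :: v :: b', red2⟩) (m := ⟨(a ++ [u]) ++ v :: b', red2'⟩)
      (by simp)).trans ?_
    refine (ih (a ++ [u]) v (fun x hx => hb x (by simp [hx])) red2' red3).trans ?_
    exact mkEq (by simp)

lemma step_step (v : V) (l : {x : List V // Red Γ x}) :
    Quot.mk (Rel Γ) (stepR Γ v (stepR Γ v l)) = Quot.mk (Rel Γ) l := by
  by_cases ht : Tail Γ v l.1
  · obtain ⟨a, b, heq, hb⟩ := ht
    have hred : Red Γ (a ++ v :: b) := heq ▸ l.2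
    have e1 : stepFun Γ v l.1 = a ++ b := stepFun_erase heq hb
    have hnt : ¬ Tail Γ v (a ++ b) := not_tail_erase hred hb
    have e3 : stepFun Γ v (stepFun Γ v l.1) = a ++ b ++ [v] := by
      rw [e1, stepFun_append hnt]
    have hr2 : Red Γ (a ++ b ++ [v]) :=
      red_append_iff.mpr ⟨red_erase hred rfl hb, hnt⟩
    refine (mk_stepR_eq e3).trans ?_
    exact ((bubble b a v hb hred hr2).symm).trans (mkEq heq.symm)
  · have e3 : stepFun Γ v (stepFun Γ v l.1) = l.1 := by
      rw [stepFun_append ht]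
      exact (stepFun_erase (l := l.1 ++ [v]) (a := l.1) (b := []) (by simp)
        (by simp)).trans (by simp)
    exact (mk_stepR_eq e3).trans (mkEq rfl)

lemma comm_aux {s t : V} (hst : Γ.Adj s t) {l : List V} (hr : Red Γ l)
    {a k d : List V} (heq : l = a ++ s :: (k ++ t :: d))
    (hks : ∀ u ∈ k ++ t :: d, Γ.Adj u s) (hd : ∀ u ∈ d, Γ.Adj u t) :
    Quot.mk (Rel Γ) (stepR Γ t (stepR Γ s ⟨l, hr⟩)) =
      Quot.mk (Rel Γ) (stepR Γ s (stepR Γ t ⟨l, hr⟩)) := by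
  have e1 : stepFun Γ s l = a ++ (k ++ t :: d) := stepFun_erase heq hks
  have e2 : stepFun Γ t (stepFun Γ s l) = (a ++ k) ++ d := by
    rw [e1]
    exact stepFun_erase (by simp) hd
  have e3 : stepFun Γ t l = (a ++ s :: k) ++ d :=
    stepFun_erase (by simp [heq]) hd
  have e4 : stepFun Γ s (stepFun Γ t l) = a ++ (k ++ d) := by
    rw [e3]
    refine stepFun_erase (a := a) (b := k ++ d) (by simp) ?_
    intro u hu
    rcases List.mem_append.mp hu with hu | hu
    · exact hks u (by simp [hu])
    · exact hks u (by simp [hu])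
  exact (mk_stepR_eq e2).trans (mk_stepR_eq (w := (a ++ k) ++ d) (e4.trans (by simp))).symm

lemma not_tail_erase_other {s t : V} (hst : Γ.Adj s t) {a b : List V}
    (heq2 : ¬ Tail Γ s (a ++ t :: b)) (hb : ∀ u ∈ b, Γ.Adj u t) :
    ¬ Tail Γ s (a ++ b) := by
  rintro ⟨c, d, heq, hd⟩
  apply heq2
  rcases List.append_eq_append_iff.mp heq with ⟨k, rfl, hk⟩ | ⟨k, hpk, hk⟩
  · -- c = a ++ k, b = k ++ s :: d
    exact ⟨a ++ t :: k, d, by simp [hk], hd⟩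
  · -- a = c ++ k, s :: d = k ++ b
    cases k with
    | nil =>
      simp only [List.append_nil] at hpk
      simp only [List.nil_append] at hk
      exact ⟨a ++ [t], d, by simp [← hk], hd⟩
    | cons s' k' =>
      obtain ⟨h1, h2⟩ : s = s' ∧ d = k' ++ b := by simpa using hk
      refine ⟨c, k' ++ t :: b, by simp [hpk, ← h1], ?_⟩
      intro u hu
      simp only [List.mem_append, List.mem_cons] at hu
      rcases hu with hu | rfl | hu
      · exact hd u (by simp [h2, hu])
      · exact hst.symm
      · exact hd u (by simp [h2, hu])

lemma comm_one {s t : V} (hst : Γ.Adj s t) {l : List V} (hr : Red Γ l)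
    (htl : Tail Γ t l) (hsl : ¬ Tail Γ s l) :
    Quot.mk (Rel Γ) (stepR Γ s (stepR Γ t ⟨l, hr⟩)) =
      Quot.mk (Rel Γ) (stepR Γ t (stepR Γ s ⟨l, hr⟩)) := by
  obtain ⟨a, b, heq, hb⟩ := htl
  have e1 : stepFun Γ t l = a ++ b := stepFun_erase heq hb
  have hnt : ¬ Tail Γ s (a ++ b) := not_tail_erase_other hst (heq ▸ hsl) hb
  have e2 : stepFun Γ s (stepFun Γ t l) = (a ++ b) ++ [s] := by
    rw [e1, stepFun_append hnt]
  have e3 : stepFun Γ t (stepFun Γ s l) = (a ++ b) ++ [s] := by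
    rw [stepFun_append hsl]
    refine (stepFun_erase (l := l ++ [s]) (a := a) (b := b ++ [s])
      (by simp [heq]) ?_).trans (by simp)
    intro u hu
    rcases List.mem_append.mp hu with hu | hu
    · exact hb u hu
    · obtain rfl : u = s := by simpa using hu
      exact hst
  exact (mk_stepR_eq e2).trans (mk_stepR_eq e3).symm

lemma step_comm {s t : V} (hst : Γ.Adj s t) (l : {x : List V // Red Γ x}) :
    Quot.mk (Rel Γ) (stepR Γ s (stepR Γ t l)) =
      Quot.mk (Rel Γ) (stepR Γ t (stepR Γ s l)) := by
  obtain ⟨l, hr⟩ := l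
  by_cases htl : Tail Γ t l <;> by_cases hsl : Tail Γ s l
  · -- both
    obtain ⟨a, b, heqs, hbs⟩ := hsl
    obtain ⟨c, d, heqt, hdt⟩ := htl
    have heq : a ++ s :: b = c ++ t :: d := heqs.symm.trans heqt
    rcases List.append_eq_append_iff.mp heq with ⟨k, rfl, hk⟩ | ⟨k, hpk, hk⟩
    · -- c = a ++ k, s :: b = k ++ t :: d
      cases k with
      | nil =>
        exfalso
        obtain ⟨h1, -⟩ : s = t ∧ b = d := by simpa using hk
        exact hst.ne h1
      | cons s' k' =>
        obtain ⟨h1, h2⟩ : s = s' ∧ b = k' ++ t :: d := by simpa using hk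
        exact (comm_aux hst hr (by rw [heqs, h2]) (h2 ▸ hbs) hdt).symm
    · -- a = c ++ k, t :: d = k ++ s :: b
      cases k with
      | nil =>
        exfalso
        obtain ⟨h1, -⟩ : t = s ∧ d = b := by simpa using hk
        exact hst.ne h1.symm
      | cons t' k' =>
        obtain ⟨h1, h2⟩ : t = t' ∧ d = k' ++ s :: b := by simpa using hk
        exact comm_aux hst.symm hr (by rw [heqt, h2]) (h2 ▸ hdt) hbs
  · -- only t
    exact comm_one hst hr htl hsl
  · -- only s
    exact (comm_one hst.symm hr hsl htl).symm
  · -- neither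
    have hTs : ¬ Tail Γ s (l ++ [t]) := by
      rw [tail_append_iff]
      rintro (rfl | ⟨-, h⟩)
      · exact hst.ne rfl
      · exact hsl h
    have hTt : ¬ Tail Γ t (l ++ [s]) := by
      rw [tail_append_iff]
      rintro (rfl | ⟨-, h⟩)
      · exact hst.ne rfl
      · exact htl h
    have e1 : stepFun Γ s (stepFun Γ t l) = (l ++ [t]) ++ [s] := by
      rw [stepFun_append htl, stepFun_append hTs]
    have e2 : stepFun Γ t (stepFun Γ s l) = (l ++ [s]) ++ [t] := by
      rw [stepFun_append hsl, stepFun_append hTt]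
    refine (mk_stepR_eq e1).trans (Eq.trans ?_ (mk_stepR_eq e2).symm)
    exact Quot.sound ⟨l, [], t, s, hst.symm, by simp, by simp⟩

end Moves

section Perm

variable (Γ) in
noncomputable def fX (v : V) : Quot (Rel Γ) → Quot (Rel Γ) :=
  Quot.lift (fun l => Quot.mk (Rel Γ) (stepR Γ v l)) (fun _ _ h => step_swap h)

lemma fX_fX (v : V) (x : Quot (Rel Γ)) : fX Γ v (fX Γ v x) = x := by
  induction x using Quot.ind with
  | _ l => exact step_step v l

lemma fX_comm {s t : V} (hst : Γ.Adj s t) (x : Quot (Rel Γ)) :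
    fX Γ s (fX Γ t x) = fX Γ t (fX Γ s x) := by
  induction x using Quot.ind with
  | _ l => exact step_comm hst l

variable (Γ) in
noncomputable def pOf (v : V) : Equiv.Perm (Quot (Rel Γ)) :=
  ⟨fX Γ v, fX Γ v, fX_fX v, fX_fX v⟩

variable (Γ) in
lemma lift_rels : ∀ r ∈ racgRels Γ, FreeGroup.lift (pOf Γ) r = 1 := by
  rintro r (⟨s, rfl⟩ | ⟨s, t, hst, rfl⟩)
  · rw [map_pow, FreeGroup.lift_apply_of, sq]
    refine Equiv.ext fun x => ?_
    rw [Equiv.Perm.mul_apply, Equiv.Perm.one_apply]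
    exact fX_fX s x
  · rw [map_pow, map_mul, FreeGroup.lift_apply_of, FreeGroup.lift_apply_of, sq]
    refine Equiv.ext fun x => ?_
    simp only [Equiv.Perm.mul_apply, Equiv.Perm.one_apply]
    show fX Γ s (fX Γ t (fX Γ s (fX Γ t x))) = x
    rw [← fX_comm hst (fX Γ t x), fX_fX t x]
    exact fX_fX s x

variable (Γ) in
noncomputable def phi : PresentedGroup (racgRels Γ) →* Equiv.Perm (Quot (Rel Γ)) :=
  PresentedGroup.toGroup (lift_rels Γ)

lemma eval : ∀ (w : List V) (hw : Red Γ w.reverse),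
    phi Γ (racgPi Γ w) (Quot.mk (Rel Γ) ⟨[], red_nil⟩) = Quot.mk (Rel Γ) ⟨w.reverse, hw⟩ := by
  intro w
  induction w with
  | nil =>
    intro hw
    rw [pi_nil, map_one, Equiv.Perm.one_apply]
    exact mkEq rfl
  | cons v t ih =>
    intro hw
    have hrev : (v :: t).reverse = t.reverse ++ [v] := by simp
    have h2 : Red Γ (t.reverse ++ [v]) := hrev ▸ hw
    obtain ⟨h3, h4⟩ := red_append_iff.mp h2
    rw [pi_cons, map_mul, Equiv.Perm.mul_apply, ih h3]
    rw [show phi Γ (PresentedGroup.of v) = pOf Γ v from PresentedGroup.toGroup.of _]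
    exact (mk_stepR_eq (stepFun_append h4)).trans (mkEq hrev.symm)

variable (Γ) in
def lenX : Quot (Rel Γ) → ℕ :=
  Quot.lift (fun l => l.1.length) (fun _ _ h => swapRel_length h)

lemma red_length_eq {w w' : List V} (hw : Red Γ w) (hw' : Red Γ w')
    (h : racgPi Γ w = racgPi Γ w') : w.length = w'.length := by
  have h1 := eval w.reverse (by rwa [List.reverse_reverse])
  have h2 := eval w'.reverse (by rwa [List.reverse_reverse])
  have hp : racgPi Γ w.reverse = racgPi Γ w'.reverse := by
    rw [pi_reverse, pi_reverse, h]
  rw [hp] at h1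
  have h4 := congrArg (lenX Γ) (h1.symm.trans h2)
  simpa [lenX] using h4

end Perm

section Geodesic

variable (Γ) in
lemma exists_red : ∀ (n : ℕ) (w : List V), w.length ≤ n →
    ∃ w', Red Γ w' ∧ racgPi Γ w' = racgPi Γ w ∧ w'.length ≤ w.length := by
  intro n
  induction n with
  | zero =>
    intro w hw
    obtain rfl : w = [] := List.length_eq_zero_iff.mp (Nat.le_zero.mp hw)
    exact ⟨[], red_nil, rfl, le_rfl⟩
  | succ n ih =>
    intro w hw
    by_cases hr : Red Γ w
    · exact ⟨w, hr, rfl, le_rfl⟩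
    · rw [Red, not_not] at hr
      obtain ⟨x, a, b, c, rfl, hb⟩ := hr
      have hlen : (a ++ (b ++ c)).length ≤ n := by
        simp only [List.length_append, List.length_cons] at hw ⊢
        omega
      obtain ⟨w', h1, h2, h3⟩ := ih (a ++ (b ++ c)) hlen
      refine ⟨w', h1, h2.trans (pi_erase hb).symm, ?_⟩
      simp only [List.length_append, List.length_cons] at h3 ⊢
      omega

lemma geodesic_iff_red (w : List V) : racgIsGeodesic Γ w ↔ Red Γ w := by
  constructor
  · intro hg
    by_contra hnr
    rw [Red, not_not] at hnr
    obtain ⟨x, a, b, c, rfl, hb⟩ := hnr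
    have := hg (a ++ (b ++ c)) (pi_erase hb).symm
    simp only [List.length_append, List.length_cons] at this
    omega
  · intro hr w' hw'
    obtain ⟨w'', h1, h2, h3⟩ := exists_red Γ w'.length w' le_rfl
    have h4 : racgPi Γ w'' = racgPi Γ w := h2.trans hw'
    have h5 := red_length_eq hr h1 h4.symm
    omega

end Geodesic

section Automaton

variable [Fintype V] [DecidableEq V] [DecidableRel Γ.Adj]

variable (Γ) in
def Efin (w : List V) : Finset V :=
  w.foldl (fun σ v => insert v (starFinset Γ v ∩ σ)) ∅

lemma mem_Efin (w : List V) (u : V) : u ∈ Efin Γ w ↔ Tail Γ u w := by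
  induction w using List.reverseRecOn with
  | nil =>
    simp only [Efin, List.foldl_nil, Finset.notMem_empty, false_iff]
    exact not_tail_nil u
  | append_singleton w v ih =>
    have : Efin Γ (w ++ [v]) = insert v (starFinset Γ v ∩ Efin Γ w) := by
      simp [Efin, List.foldl_append]
    rw [this, tail_append_iff]
    simp only [Finset.mem_insert, Finset.mem_inter, starFinset,
      SimpleGraph.mem_neighborFinset, ih]
    tauto

variable (Γ) in
lemma aut (w : List V) :
    (Red Γ w ∧ w.foldl (racgMu Γ) (some ∅) = some (Efin Γ w)) ∨
    (¬ Red Γ w ∧ w.foldl (racgMu Γ) (some ∅) = none) := by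
  induction w using List.reverseRecOn with
  | nil => exact Or.inl ⟨red_nil, rfl⟩
  | append_singleton w v ih =>
    rw [List.foldl_append]
    rcases ih with ⟨hr, hf⟩ | ⟨hr, hf⟩
    · rw [hf]
      by_cases ht : Tail Γ v w
      · refine Or.inr ⟨?_, ?_⟩
        · rw [red_append_iff]; tauto
        · show racgMu Γ (some (Efin Γ w)) v = none
          simp only [racgMu]
          rw [if_pos ((mem_Efin w v).mpr ht)]
      · refine Or.inl ⟨red_append_iff.mpr ⟨hr, ht⟩, ?_⟩
        show racgMu Γ (some (Efin Γ w)) v = some (Efin Γ (w ++ [v]))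
        simp only [racgMu]
        rw [if_neg (fun h => ht ((mem_Efin w v).mp h))]
        congr 1
        simp [Efin, List.foldl_append]
    · rw [hf]
      refine Or.inr ⟨?_, rfl⟩
      rw [red_append_iff]; tauto

end Automaton

end RacgAux

/-- The automaton `D` accepts a word `w` (i.e. reading `w` from the start
state `∅` ends in a non-fail state) if and only if `w` is geodesic for the
right-angled Coxeter system `(G, S)`. -/
theorem racg_automaton_accepts_iff_geodesic {V : Type*} [Fintype V] [DecidableEq V]
    (Γ : SimpleGraph V) [DecidableRel Γ.Adj] (w : List V) :
    w.foldl (racgMu Γ) (some (∅ : Finset V)) ≠ none ↔ racgIsGeodesic Γ w := by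
  rw [RacgAux.geodesic_iff_red]
  rcases RacgAux.aut Γ w with ⟨hr, hf⟩ | ⟨hr, hf⟩
  · rw [hf]; simp [hr]
  · rw [hf]; simp [hr]
end

section
/- Let Γ₁ and Γ₂ be finite simple graphs, each link-regular, such that for every k ≥ 1 they have the same number of cliques of size k, and such that |Link(σ)| = |Link(σ′)| for all cliques σ of Γ₁ and σ′ of Γ₂ with |σ| = |σ′|. Then the right-angled Artin groups A₁ and A₂ based on Γ₁ and Γ₂ have identical geodesic growth functions with respect to the generating sets S₁ ∪ S₁⁻¹ and S₂ ∪ S₂⁻¹: for every n, the number of words of length n over S₁ ∪ S₁⁻¹ whose length equals the word length of the element they represent equals the corresponding number for A₂. -/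
/-- The relators of the right-angled Artin group on a simple graph `Γ`:
commutators of adjacent generators. -/
def raagRels {V : Type*} (Γ : SimpleGraph V) : Set (FreeGroup V) :=
  {r | ∃ s t : V, Γ.Adj s t ∧
    r = FreeGroup.of s * FreeGroup.of t * (FreeGroup.of s)⁻¹ * (FreeGroup.of t)⁻¹}

/-- The natural projection from words over `S ∪ S⁻¹` (encoded as pairs of a
generator and a sign) to the right-angled Artin group. -/
def raagPi {V : Type*} (Γ : SimpleGraph V) (w : List (V × Bool)) :
    PresentedGroup (raagRels Γ) :=
  (w.map fun x =>
    cond x.2 (PresentedGroup.of x.1 : PresentedGroup (raagRels Γ))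
      (PresentedGroup.of x.1 : PresentedGroup (raagRels Γ))⁻¹).prod

/-- A word over `S ∪ S⁻¹` is geodesic if no shorter word represents the same
element. -/
def raagIsGeodesic {V : Type*} (Γ : SimpleGraph V) (w : List (V × Bool)) : Prop :=
  ∀ w' : List (V × Bool), raagPi Γ w' = raagPi Γ w → w.length ≤ w'.length

/-- The geodesic growth function of the right-angled Artin group on `Γ` with
respect to `S ∪ S⁻¹`. -/
noncomputable def raagGeodesicGrowth {V : Type*} (Γ : SimpleGraph V) (n : ℕ) : ℕ :=
  Nat.card {w : List (V × Bool) // raagIsGeodesic Γ w ∧ w.length = n}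

/-- `Link(σ)`: the set of vertices outside `σ` adjacent to every vertex of `σ`. -/
def graphLink {V : Type*} [Fintype V] [DecidableEq V] (Γ : SimpleGraph V)
    [DecidableRel Γ.Adj] (σ : Finset V) : Finset V :=
  Finset.univ.filter fun v => v ∉ σ ∧ ∀ u ∈ σ, Γ.Adj v u

/-- A graph is link-regular if `|Link(σ)|` depends only on `|σ|` over all
nonempty cliques `σ`. -/
def LinkRegular {V : Type*} [Fintype V] [DecidableEq V] (Γ : SimpleGraph V)
    [DecidableRel Γ.Adj] : Prop :=
  ∀ σ σ' : Finset V, Γ.IsClique (σ : Set V) → Γ.IsClique (σ' : Set V) →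
    σ.Nonempty → σ'.Nonempty → σ.card = σ'.card →
      (graphLink Γ σ).card = (graphLink Γ σ').card


namespace RaagAux

variable {V : Type*} (Γ : SimpleGraph V)

/-- formal inverse of a letter -/
def linv (x : V × Bool) : V × Bool := (x.1, !x.2)

@[simp] lemma linv_linv (x : V × Bool) : linv (linv x) = x := by
  cases x with | mk s b => cases b <;> rfl

@[simp] lemma linv_fst (x : V × Bool) : (linv x).1 = x.1 := rfl

lemma linv_ne (x : V × Bool) : linv x ≠ x := by
  cases x with | mk s b => cases b <;> simp [linv]

lemma linv_eq_iff (x y : V × Bool) : y = linv x ↔ x = linv y := by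
  constructor <;> (rintro rfl; simp)

/-- the group element of a letter -/
def elt (x : V × Bool) : PresentedGroup (raagRels Γ) :=
  cond x.2 (PresentedGroup.of x.1) (PresentedGroup.of x.1)⁻¹

@[simp] lemma elt_linv (x : V × Bool) : elt Γ (linv x) = (elt Γ x)⁻¹ := by
  cases x with | mk s b => cases b <;> simp [elt, linv]

lemma raagPi_eq (w : List (V × Bool)) : raagPi Γ w = (w.map (elt Γ)).prod := rfl

@[simp] lemma raagPi_nil : raagPi Γ [] = 1 := rfl

@[simp] lemma raagPi_cons (x : V × Bool) (w : List (V × Bool)) :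
    raagPi Γ (x :: w) = elt Γ x * raagPi Γ w := by
  simp [raagPi_eq]

@[simp] lemma raagPi_append (a b : List (V × Bool)) :
    raagPi Γ (a ++ b) = raagPi Γ a * raagPi Γ b := by
  simp [raagPi_eq]

lemma of_commute {s t : V} (h : Γ.Adj s t) :
    Commute (PresentedGroup.of (rels := raagRels Γ) s) (PresentedGroup.of t) := by
  have hr : (FreeGroup.of s * FreeGroup.of t * (FreeGroup.of s)⁻¹ * (FreeGroup.of t)⁻¹ :
      FreeGroup V) ∈ raagRels Γ := ⟨s, t, h, rfl⟩
  have h1 : ((QuotientGroup.mk (FreeGroup.of s * FreeGroup.of t * (FreeGroup.of s)⁻¹ *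
      (FreeGroup.of t)⁻¹ : FreeGroup V) : PresentedGroup (raagRels Γ))) = 1 := by
    rw [QuotientGroup.eq_one_iff]
    exact Subgroup.subset_normalClosure hr
  have h2 : (PresentedGroup.of (rels := raagRels Γ) s) * PresentedGroup.of t *
      (PresentedGroup.of (rels := raagRels Γ) s)⁻¹ * (PresentedGroup.of t)⁻¹ = 1 := by
    simp only [QuotientGroup.mk_mul, QuotientGroup.mk_inv] at h1
    exact h1
  have h3 : PresentedGroup.of (rels := raagRels Γ) s * PresentedGroup.of t *
      (PresentedGroup.of (rels := raagRels Γ) s)⁻¹ = PresentedGroup.of t :=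
    mul_inv_eq_one.mp h2
  exact mul_inv_eq_iff_eq_mul.mp h3

lemma elt_commute {x y : V × Bool} (h : Γ.Adj x.1 y.1) :
    Commute (elt Γ x) (elt Γ y) := by
  have h0 : Commute (PresentedGroup.of (rels := raagRels Γ) x.1) (PresentedGroup.of y.1) :=
    of_commute Γ h
  cases hx : x.2 <;> cases hy : y.2 <;> simp [elt, hx, hy] <;>
    first
      | exact h0
      | exact h0.inv_left
      | exact h0.inv_right
      | exact (h0.inv_left).inv_right

lemma pi_commute {x : V × Bool} {b : List (V × Bool)}
    (h : ∀ y ∈ b, Γ.Adj x.1 y.1) : Commute (elt Γ x) (raagPi Γ b) := by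
  induction b with
  | nil => simp [Commute.one_right]
  | cons y b ih =>
    rw [raagPi_cons]
    exact (elt_commute Γ (h y (by simp))).mul_right (ih fun z hz => h z (by simp [hz]))

lemma pi_cancel {x : V × Bool} {a b c : List (V × Bool)}
    (h : ∀ y ∈ b, Γ.Adj x.1 y.1) :
    raagPi Γ (a ++ x :: (b ++ linv x :: c)) = raagPi Γ (a ++ (b ++ c)) := by
  have hc := (pi_commute Γ h).eq
  simp only [raagPi_append, raagPi_cons, elt_linv]
  rw [← mul_assoc (elt Γ x), hc]
  group

end RaagAux

namespace RaagAux

variable {V : Type*} (Γ : SimpleGraph V) [DecidableEq V] [DecidableRel Γ.Adj]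

/-- `canc Γ x w`: the letter `x` can cancel with a letter `linv x` in `w`,
all letters before it commuting with `x`. -/
def canc (x : V × Bool) : List (V × Bool) → Prop
  | [] => False
  | y :: w => y = linv x ∨ (Γ.Adj x.1 y.1 ∧ canc x w)

@[simp] lemma canc_nil (x : V × Bool) : ¬ canc Γ x [] := fun h => h

lemma canc_cons (x y : V × Bool) (w : List (V × Bool)) :
    canc Γ x (y :: w) ↔ y = linv x ∨ (Γ.Adj x.1 y.1 ∧ canc Γ x w) := Iff.rfl

/-- reduced words: no letter can cancel with a later one. -/
def RedR : List (V × Bool) → Prop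
  | [] => True
  | x :: w => ¬ canc Γ x w ∧ RedR w

@[simp] lemma redR_nil : RedR Γ [] := trivial

lemma redR_cons (x : V × Bool) (w : List (V × Bool)) :
    RedR Γ (x :: w) ↔ ¬ canc Γ x w ∧ RedR Γ w := Iff.rfl

lemma RedR.tail_suffix : ∀ (a w : List (V × Bool)), RedR Γ (a ++ w) → RedR Γ w := by
  intro a
  induction a with
  | nil => exact fun w h => h
  | cons y a ih => exact fun w h => ih w h.2

/-- left multiplication by a letter, with reduction. -/
def push (x : V × Bool) : List (V × Bool) → List (V × Bool)
  | [] => [x]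
  | y :: w =>
    if y = linv x then w
    else if Γ.Adj x.1 y.1 then y :: push x w
    else x :: y :: w

@[simp] lemma push_nil (x : V × Bool) : push Γ x [] = [x] := rfl

lemma push_cancel {x y : V × Bool} (w : List (V × Bool)) (h : y = linv x) :
    push Γ x (y :: w) = w := by simp [push, h]

lemma push_adj {x y : V × Bool} (w : List (V × Bool)) (h1 : y ≠ linv x)
    (h2 : Γ.Adj x.1 y.1) : push Γ x (y :: w) = y :: push Γ x w := by
  simp [push, h1, h2]

lemma push_other {x y : V × Bool} (w : List (V × Bool)) (h1 : y ≠ linv x)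
    (h2 : ¬ Γ.Adj x.1 y.1) : push Γ x (y :: w) = x :: y :: w := by
  simp [push, h1, h2]

lemma length_push_le (x : V × Bool) (w : List (V × Bool)) :
    (push Γ x w).length ≤ w.length + 1 := by
  induction w with
  | nil => simp
  | cons y w ih =>
    by_cases h1 : y = linv x
    · rw [push_cancel Γ w h1]; simp; omega
    · by_cases h2 : Γ.Adj x.1 y.1
      · rw [push_adj Γ w h1 h2]; simpa using ih
      · rw [push_other Γ w h1 h2]; simp

/-- decomposition of `push` in the cancelling case -/
lemma push_of_canc {x : V × Bool} {w : List (V × Bool)} (h : canc Γ x w) :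
    ∃ a b, w = a ++ linv x :: b ∧ (∀ y ∈ a, Γ.Adj x.1 y.1) ∧ push Γ x w = a ++ b := by
  induction w with
  | nil => exact absurd h (canc_nil Γ x)
  | cons y w ih =>
    by_cases h1 : y = linv x
    · exact ⟨[], w, by simp [h1], by simp, by simp [push_cancel Γ w h1]⟩
    · rcases h with h | ⟨h2, h3⟩
      · exact absurd h h1
      · obtain ⟨a, b, rfl, ha, hp⟩ := ih h3
        exact ⟨y :: a, b, rfl, by simpa [h2] using ha, by simp [push_adj Γ _ h1 h2, hp]⟩

/-- decomposition of `push` in the non-cancelling case -/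
lemma push_of_not_canc {x : V × Bool} {w : List (V × Bool)} (h : ¬ canc Γ x w) :
    ∃ a b, w = a ++ b ∧ (∀ y ∈ a, Γ.Adj x.1 y.1) ∧ push Γ x w = a ++ x :: b := by
  induction w with
  | nil => exact ⟨[], [], by simp, by simp, by simp⟩
  | cons y w ih =>
    rw [canc_cons] at h
    push_neg at h
    obtain ⟨h1, h2⟩ := h
    by_cases hadj : Γ.Adj x.1 y.1
    · obtain ⟨a, b, rfl, ha, hp⟩ := ih (h2 hadj)
      exact ⟨y :: a, b, rfl, by simpa [hadj] using ha, by simp [push_adj Γ _ h1 hadj, hp]⟩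
    · exact ⟨[], y :: w, by simp, by simp, by simp [push_other Γ _ h1 hadj]⟩

lemma push_append {x : V × Bool} {a : List (V × Bool)} (b : List (V × Bool))
    (ha : ∀ y ∈ a, Γ.Adj x.1 y.1) : push Γ x (a ++ b) = a ++ push Γ x b := by
  induction a with
  | nil => simp
  | cons y a ih =>
    have hadj : Γ.Adj x.1 y.1 := ha y (by simp)
    have hne : y ≠ linv x := by
      intro hy; rw [hy] at hadj; exact Γ.irrefl hadj
    simp only [List.cons_append]
    rw [push_adj Γ _ hne hadj, ih fun z hz => ha z (by simp [hz])]

lemma canc_append_iff {z : V × Bool} {a : List (V × Bool)} (b : List (V × Bool))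
    (ha : ∀ y ∈ a, Γ.Adj z.1 y.1) : canc Γ z (a ++ b) ↔ canc Γ z b := by
  induction a with
  | nil => simp
  | cons y a ih =>
    have hadj : Γ.Adj z.1 y.1 := ha y (by simp)
    have hne : y ≠ linv z := by
      intro hy; rw [hy] at hadj; exact Γ.irrefl hadj
    simp only [List.cons_append, canc_cons, hne, false_or, hadj, true_and]
    exact ih fun u hu => ha u (by simp [hu])

end RaagAux

namespace RaagAux

variable {V : Type*} (Γ : SimpleGraph V) [DecidableEq V] [DecidableRel Γ.Adj]

/-- one shuffle of adjacent commuting letters -/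
inductive Step : List (V × Bool) → List (V × Bool) → Prop
  | swap (p q : V × Bool) (h : Γ.Adj p.1 q.1) (b : List (V × Bool)) :
      Step (p :: q :: b) (q :: p :: b)
  | cons (x : V × Bool) {w u : List (V × Bool)} : Step w u → Step (x :: w) (x :: u)

lemma Step.symm' : ∀ {w u}, Step Γ w u → Step Γ u w := by
  intro w u h
  induction h with
  | swap p q h b => exact Step.swap q p (Γ.adj_symm h) b
  | cons x _ ih => exact Step.cons x ih

/-- shuffle equivalence -/
def SEq : List (V × Bool) → List (V × Bool) → Prop := Relation.ReflTransGen (Step Γ)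

lemma SEq.refl' (w : List (V × Bool)) : SEq Γ w w := Relation.ReflTransGen.refl

lemma SEq.trans' {a b c} (h1 : SEq Γ a b) (h2 : SEq Γ b c) : SEq Γ a c :=
  Relation.ReflTransGen.trans h1 h2

lemma SEq.symm' {a b} (h : SEq Γ a b) : SEq Γ b a :=
  Std.Symm.symm (self := @Relation.ReflTransGen.stdSymm _ (Step Γ) ⟨fun _ _ hs => hs.symm'⟩) _ _ h

lemma SEq.of_step {a b} (h : Step Γ a b) : SEq Γ a b :=
  Relation.ReflTransGen.single h

lemma SEq.cons (x : V × Bool) {w u} (h : SEq Γ w u) : SEq Γ (x :: w) (x :: u) :=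
  Relation.ReflTransGen.lift (x :: ·) (fun _ _ hs => Step.cons x hs) _ _ h

lemma SEq.append_left (a : List (V × Bool)) {w u} (h : SEq Γ w u) :
    SEq Γ (a ++ w) (a ++ u) := by
  induction a with
  | nil => exact h
  | cons y a ih => exact (ih).cons Γ y

lemma step_length {w u} (h : Step Γ w u) : w.length = u.length := by
  induction h with
  | swap p q h b => simp
  | cons x _ ih => simp [ih]

lemma SEq.length_eq {w u} (h : SEq Γ w u) : w.length = u.length := by
  induction h with
  | refl => rfl
  | tail _ hs ih => exact ih.trans (step_length Γ hs)

lemma step_pi {w u} (h : Step Γ w u) : raagPi Γ w = raagPi Γ u := by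
  induction h with
  | swap p q h b =>
    simp only [raagPi_cons, ← mul_assoc]
    rw [(elt_commute Γ h).eq]
  | cons x _ ih => simp [ih]

lemma SEq.pi_eq {w u} (h : SEq Γ w u) : raagPi Γ w = raagPi Γ u := by
  induction h with
  | refl => rfl
  | tail _ hs ih => exact ih.trans (step_pi Γ hs)

/-- shuffling a letter past commuting letters -/
lemma seq_shuffle (x : V × Bool) (c d : List (V × Bool)) (hc : ∀ y ∈ c, Γ.Adj x.1 y.1) :
    SEq Γ (x :: (c ++ d)) (c ++ x :: d) := by
  induction c with
  | nil => exact SEq.refl' Γ _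
  | cons y c ih =>
    have h1 : Step Γ (x :: y :: (c ++ d)) (y :: x :: (c ++ d)) :=
      Step.swap x y (hc y (by simp)) _
    exact (SEq.of_step Γ h1).trans' Γ
      ((ih fun z hz => hc z (by simp [hz])).cons Γ y)

/-- `canc` is invariant under shuffles -/
lemma step_canc (x : V × Bool) {w u} (h : Step Γ w u) : canc Γ x w ↔ canc Γ x u := by
  induction h with
  | swap p q hpq b =>
    simp only [canc_cons]
    constructor
    · rintro (h1 | ⟨h1, h2 | ⟨h3, h4⟩⟩)
      · refine Or.inr ⟨?_, Or.inl h1⟩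
        rw [h1] at hpq; exact hpq
      · exact Or.inl h2
      · exact Or.inr ⟨h3, Or.inr ⟨h1, h4⟩⟩
    · rintro (h1 | ⟨h1, h2 | ⟨h3, h4⟩⟩)
      · refine Or.inr ⟨?_, Or.inl h1⟩
        rw [h1] at hpq; exact hpq.symm
      · exact Or.inl h2
      · exact Or.inr ⟨h3, Or.inr ⟨h1, h4⟩⟩
  | cons y hwu ih =>
    simp only [canc_cons, ih]

lemma step_redR {w u} (h : Step Γ w u) : RedR Γ w → RedR Γ u := by
  induction h with
  | swap p q hpq b =>
    rintro ⟨h1, h2, h3⟩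
    refine ⟨?_, ?_, h3⟩
    · rintro (hq | ⟨_, hcb⟩)
      · rw [hq] at hpq
        exact Γ.irrefl hpq
      · exact h2 hcb
    · intro hc
      exact h1 (Or.inr ⟨hpq, hc⟩)
  | cons x hwu ih =>
    rintro ⟨h1, h2⟩
    exact ⟨fun hc => h1 ((step_canc Γ x hwu).mpr hc), ih h2⟩

lemma SEq.redR_iff {w u} (h : SEq Γ w u) : RedR Γ w ↔ RedR Γ u := by
  induction h with
  | refl => rfl
  | tail hab hs ih => exact ih.trans ⟨step_redR Γ hs, step_redR Γ hs.symm'⟩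

end RaagAux

namespace RaagAux

variable {V : Type*} (Γ : SimpleGraph V) [DecidableEq V] [DecidableRel Γ.Adj]

lemma linv_ne_of_adj {x y : V × Bool} (h : Γ.Adj x.1 y.1) : y ≠ linv x := by
  intro hy
  rw [hy] at h
  exact Γ.irrefl h

/-- pushing respects shuffles -/
lemma step_push (x : V × Bool) {w u} (h : Step Γ w u) : SEq Γ (push Γ x w) (push Γ x u) := by
  induction h with
  | swap p q hpq b =>
    by_cases hp : p = linv x
    · -- p cancels with x
      have hq : q ≠ linv x := by
        intro hq'
        rw [hp, hq'] at hpq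
        exact Γ.irrefl hpq
      have hxq : Γ.Adj x.1 q.1 := by rw [hp] at hpq; exact hpq
      rw [push_cancel Γ _ hp, push_adj Γ _ hq hxq, push_cancel Γ _ hp]
      exact SEq.refl' Γ _
    · by_cases hq : q = linv x
      · have hxp : Γ.Adj x.1 p.1 := by rw [hq] at hpq; exact hpq.symm
        rw [push_cancel Γ _ hq, push_adj Γ _ hp hxp, push_cancel Γ _ hq]
        exact SEq.refl' Γ _
      · by_cases hxp : Γ.Adj x.1 p.1 <;> by_cases hxq : Γ.Adj x.1 q.1
        · have l1 : push Γ x (p :: q :: b) = p :: q :: push Γ x b := by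
            rw [push_adj Γ _ hp hxp, push_adj Γ _ hq hxq]
          have l2 : push Γ x (q :: p :: b) = q :: p :: push Γ x b := by
            rw [push_adj Γ _ hq hxq, push_adj Γ _ hp hxp]
          rw [l1, l2]
          exact SEq.of_step Γ (Step.swap p q hpq _)
        · have l1 : push Γ x (p :: q :: b) = p :: x :: q :: b := by
            rw [push_adj Γ _ hp hxp, push_other Γ _ hq hxq]
          have l2 : push Γ x (q :: p :: b) = x :: q :: p :: b := by
            rw [push_other Γ _ hq hxq]
          rw [l1, l2]
          exact (SEq.of_step Γ (Step.swap p x (Γ.adj_symm hxp) _)).trans' Γ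
            ((SEq.of_step Γ (Step.swap p q hpq _)).cons Γ x)
        · have l1 : push Γ x (p :: q :: b) = x :: p :: q :: b := by
            rw [push_other Γ _ hp hxp]
          have l2 : push Γ x (q :: p :: b) = q :: x :: p :: b := by
            rw [push_adj Γ _ hq hxq, push_other Γ _ hp hxp]
          rw [l1, l2]
          exact ((SEq.of_step Γ (Step.swap p q hpq _)).cons Γ x).trans' Γ
            (SEq.of_step Γ (Step.swap x q hxq _))
        · have l1 : push Γ x (p :: q :: b) = x :: p :: q :: b := by
            rw [push_other Γ _ hp hxp]
          have l2 : push Γ x (q :: p :: b) = x :: q :: p :: b := by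
            rw [push_other Γ _ hq hxq]
          rw [l1, l2]
          exact (SEq.of_step Γ (Step.swap p q hpq _)).cons Γ x
  | cons y hwu ih =>
    by_cases hy : y = linv x
    · rw [push_cancel Γ _ hy, push_cancel Γ _ hy]
      exact SEq.of_step Γ hwu
    · by_cases hxy : Γ.Adj x.1 y.1
      · rw [push_adj Γ _ hy hxy, push_adj Γ _ hy hxy]
        exact ih.cons Γ y
      · rw [push_other Γ _ hy hxy, push_other Γ _ hy hxy]
        exact ((SEq.of_step Γ hwu).cons Γ y).cons Γ x

lemma seq_push (x : V × Bool) {w u} (h : SEq Γ w u) : SEq Γ (push Γ x w) (push Γ x u) := by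
  induction h with
  | refl => exact SEq.refl' Γ _
  | tail _ hs ih => exact ih.trans' Γ (step_push Γ x hs)

/-- key: pushing a letter onto a word not cancelling with it preserves non-cancellation
    of other letters -/
lemma not_canc_push {x y : V × Bool} {w : List (V × Bool)} (hadj : Γ.Adj x.1 y.1)
    (h : ¬ canc Γ y w) : ¬ canc Γ y (push Γ x w) := by
  induction w with
  | nil =>
    simp only [push_nil, canc_cons, canc_nil, and_false, or_false]
    intro hx
    rw [hx] at hadj
    exact Γ.irrefl hadj
  | cons z w ih =>
    rw [canc_cons] at h
    push_neg at h
    obtain ⟨h1, h2⟩ := h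
    by_cases hz : z = linv x
    · rw [push_cancel Γ _ hz]
      intro hc
      apply h2
      · rw [hz]
        exact (Γ.adj_symm hadj : Γ.Adj y.1 x.1)
      · exact hc
    · by_cases hxz : Γ.Adj x.1 z.1
      · rw [push_adj Γ _ hz hxz]
        rintro (hzy | ⟨hyz, hc⟩)
        · exact h1 hzy
        · exact ih (h2 hyz) hc
      · rw [push_other Γ _ hz hxz]
        rintro (hxy' | ⟨hyx, hc⟩)
        · rw [hxy'] at hadj
          exact Γ.irrefl hadj
        · exact absurd hc (by rw [canc_cons]; push_neg; exact ⟨h1, h2⟩)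

/-- pushing preserves reducedness -/
lemma redR_push (x : V × Bool) {w : List (V × Bool)} (h : RedR Γ w) :
    RedR Γ (push Γ x w) := by
  induction w with
  | nil => exact ⟨canc_nil Γ x, trivial⟩
  | cons y w ih =>
    obtain ⟨h1, h2⟩ := h
    by_cases hy : y = linv x
    · rw [push_cancel Γ _ hy]
      exact h2
    · by_cases hxy : Γ.Adj x.1 y.1
      · rw [push_adj Γ _ hy hxy]
        exact ⟨not_canc_push Γ hxy h1, ih h2⟩
      · rw [push_other Γ _ hy hxy]
        refine ⟨?_, h1, h2⟩
        rintro (hyx | ⟨hxy', _⟩)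
        · exact hy hyx
        · exact hxy hxy'

/-- push of the inverse undoes push (up to shuffles), for reduced words -/
lemma push_linv_push {x : V × Bool} {w : List (V × Bool)} (h : RedR Γ w) :
    SEq Γ (push Γ (linv x) (push Γ x w)) w := by
  by_cases hc : canc Γ x w
  · obtain ⟨a, b, rfl, ha, hp⟩ := push_of_canc Γ hc
    rw [hp]
    have ha' : ∀ y ∈ a, Γ.Adj (linv x).1 y.1 := by simpa using ha
    rw [push_append Γ b ha']
    have hb : ¬ canc Γ (linv x) b := by
      have := RedR.tail_suffix Γ a _ h
      simpa [redR_cons] using this.1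
    obtain ⟨c, d, rfl, hcadj, hpb⟩ := push_of_not_canc Γ hb
    rw [hpb]
    refine SEq.symm' Γ ?_
    refine SEq.append_left Γ a ?_
    have : ∀ y ∈ c, Γ.Adj (linv x).1 y.1 := hcadj
    exact seq_shuffle Γ (linv x) c d (by simpa using hcadj)
  · obtain ⟨a, b, rfl, ha, hp⟩ := push_of_not_canc Γ hc
    rw [hp]
    have ha' : ∀ y ∈ a, Γ.Adj (linv x).1 y.1 := by simpa using ha
    rw [push_append Γ _ ha', push_cancel Γ b (by simp)]
    exact SEq.refl' Γ _

/-- pushes of commuting letters commute up to shuffle -/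
lemma push_push_comm {x y : V × Bool} (hxy : Γ.Adj x.1 y.1) (w : List (V × Bool)) :
    SEq Γ (push Γ x (push Γ y w)) (push Γ y (push Γ x w)) := by
  induction w with
  | nil =>
    have hyx : y ≠ linv x := linv_ne_of_adj Γ hxy
    have hxy' : x ≠ linv y := linv_ne_of_adj Γ (Γ.adj_symm hxy)
    rw [push_nil, push_nil, push_adj Γ _ hyx hxy, push_adj Γ _ hxy' (Γ.adj_symm hxy)]
    exact SEq.of_step Γ (Step.swap y x (Γ.adj_symm hxy) _)
  | cons z w ih =>
    by_cases hzy : z = linv y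
    · have hz1 : z.1 = y.1 := by rw [hzy, linv_fst]
      have hzx : z ≠ linv x := fun h' => Γ.ne_of_adj hxy (by rw [← hz1, h', linv_fst])
      have hxz : Γ.Adj x.1 z.1 := by rw [hz1]; exact hxy
      have l1 : push Γ x (push Γ y (z :: w)) = push Γ x w := by
        rw [push_cancel Γ _ hzy]
      have l2 : push Γ y (push Γ x (z :: w)) = push Γ x w := by
        rw [push_adj Γ _ hzx hxz, push_cancel Γ _ hzy]
      rw [l1, l2]
      exact SEq.refl' Γ _
    · by_cases hzx : z = linv x
      · have hz1 : z.1 = x.1 := by rw [hzx, linv_fst]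
        have hyz : Γ.Adj y.1 z.1 := by rw [hz1]; exact Γ.adj_symm hxy
        have l1 : push Γ x (push Γ y (z :: w)) = push Γ y w := by
          rw [push_adj Γ _ hzy hyz, push_cancel Γ _ hzx]
        have l2 : push Γ y (push Γ x (z :: w)) = push Γ y w := by
          rw [push_cancel Γ _ hzx]
        rw [l1, l2]
        exact SEq.refl' Γ _
      · by_cases hyadj : Γ.Adj y.1 z.1 <;> by_cases hxadj : Γ.Adj x.1 z.1
        · have l1 : push Γ x (push Γ y (z :: w)) = z :: push Γ x (push Γ y w) := by
            rw [push_adj Γ _ hzy hyadj, push_adj Γ _ hzx hxadj]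
          have l2 : push Γ y (push Γ x (z :: w)) = z :: push Γ y (push Γ x w) := by
            rw [push_adj Γ _ hzx hxadj, push_adj Γ _ hzy hyadj]
          rw [l1, l2]
          exact ih.cons Γ z
        · have l1 : push Γ x (push Γ y (z :: w)) = x :: z :: push Γ y w := by
            rw [push_adj Γ _ hzy hyadj, push_other Γ _ hzx hxadj]
          have l2 : push Γ y (push Γ x (z :: w)) = x :: z :: push Γ y w := by
            rw [push_other Γ _ hzx hxadj,
              push_adj Γ _ (linv_ne_of_adj Γ (Γ.adj_symm hxy)) (Γ.adj_symm hxy),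
              push_adj Γ _ hzy hyadj]
          rw [l1, l2]
          exact SEq.refl' Γ _
        · have l1 : push Γ x (push Γ y (z :: w)) = y :: z :: push Γ x w := by
            rw [push_other Γ _ hzy hyadj, push_adj Γ _ (linv_ne_of_adj Γ hxy) hxy,
              push_adj Γ _ hzx hxadj]
          have l2 : push Γ y (push Γ x (z :: w)) = y :: z :: push Γ x w := by
            rw [push_adj Γ _ hzx hxadj, push_other Γ _ hzy hyadj]
          rw [l1, l2]
          exact SEq.refl' Γ _
        · have l1 : push Γ x (push Γ y (z :: w)) = y :: x :: z :: w := by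
            rw [push_other Γ _ hzy hyadj, push_adj Γ _ (linv_ne_of_adj Γ hxy) hxy,
              push_other Γ _ hzx hxadj]
          have l2 : push Γ y (push Γ x (z :: w)) = x :: y :: z :: w := by
            rw [push_other Γ _ hzx hxadj,
              push_adj Γ _ (linv_ne_of_adj Γ (Γ.adj_symm hxy)) (Γ.adj_symm hxy),
              push_other Γ _ hzy hyadj]
          rw [l1, l2]
          exact SEq.of_step Γ (Step.swap y x (Γ.adj_symm hxy) _)

end RaagAux

namespace RaagAux

variable {V : Type*} (Γ : SimpleGraph V) [DecidableEq V] [DecidableRel Γ.Adj]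

def sSetoid : Setoid (List (V × Bool)) :=
  ⟨SEq Γ, ⟨SEq.refl' Γ, fun h => h.symm' Γ, fun h1 h2 => h1.trans' Γ h2⟩⟩

def TraceQ := Quotient (sSetoid Γ)

def RedQ : TraceQ Γ → Prop :=
  Quotient.lift (RedR Γ) fun _ _ h => propext (h.redR_iff Γ)

/-- reduced traces -/
def QR := {q : TraceQ Γ // RedQ Γ q}

def mkQ (w : List (V × Bool)) : TraceQ Γ := Quotient.mk (sSetoid Γ) w

@[simp] lemma redQ_mk (w : List (V × Bool)) : RedQ Γ (mkQ Γ w) = RedR Γ w := rfl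

def pushT (x : V × Bool) : TraceQ Γ → TraceQ Γ :=
  Quotient.map (push Γ x) fun _ _ h => seq_push Γ x h

@[simp] lemma pushT_mk (x : V × Bool) (w : List (V × Bool)) :
    pushT Γ x (mkQ Γ w) = mkQ Γ (push Γ x w) := rfl

def pushR (x : V × Bool) : QR Γ → QR Γ := fun q =>
  ⟨pushT Γ x q.1, by
    obtain ⟨q, hq⟩ := q
    induction q using Quotient.ind
    exact redR_push Γ x hq⟩

lemma pushR_pushR_linv (x : V × Bool) (q : QR Γ) :
    pushR Γ (linv x) (pushR Γ x q) = q := by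
  obtain ⟨q, hq⟩ := q
  induction q using Quotient.ind with | _ w =>
  refine Subtype.ext ?_
  exact Quotient.sound (push_linv_push Γ (x := x) hq)

/-- the permutation of reduced traces induced by a letter -/
def pushE (x : V × Bool) : Equiv.Perm (QR Γ) where
  toFun := pushR Γ x
  invFun := pushR Γ (linv x)
  left_inv := fun q => pushR_pushR_linv Γ x q
  right_inv := fun q => by
    have := pushR_pushR_linv Γ (linv x) q
    rwa [linv_linv] at this

lemma pushE_comm {s t : V} (h : Γ.Adj s t) :
    pushE Γ ((s, true) : V × Bool) * pushE Γ (t, true) =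
      pushE Γ ((t, true) : V × Bool) * pushE Γ (s, true) := by
  ext q
  obtain ⟨q, hq⟩ := q
  induction q using Quotient.ind with | _ w =>
  show (pushE Γ (s, true)) ((pushE Γ (t, true)) _) = (pushE Γ (t, true)) ((pushE Γ (s, true)) _)
  refine Subtype.ext ?_
  exact Quotient.sound (push_push_comm Γ (x := (s, true)) (y := (t, true)) h w)

/-- the action of the RAAG on reduced traces -/
noncomputable def eta : PresentedGroup (raagRels Γ) →* Equiv.Perm (QR Γ) :=
  PresentedGroup.toGroup (f := fun s => pushE Γ (s, true)) (by
    rintro r ⟨s, t, hst, rfl⟩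
    simp only [map_mul, map_inv, FreeGroup.lift_apply_of]
    rw [mul_inv_eq_one]
    have := pushE_comm Γ hst
    group
    rw [this]
    group)

@[simp] lemma eta_of (s : V) : eta Γ (PresentedGroup.of s) = pushE Γ (s, true) :=
  PresentedGroup.toGroup.of _

def emptyQR : QR Γ := ⟨mkQ Γ [], trivial⟩

/-- normal form via iterated pushes -/
def run : List (V × Bool) → List (V × Bool)
  | [] => []
  | x :: w => push Γ x (run w)

lemma eta_elt (x : V × Bool) (q : QR Γ) : eta Γ (elt Γ x) q = pushR Γ x q := by
  cases x with | mk s b =>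
  cases b
  · have : elt Γ ((s, false) : V × Bool) = (PresentedGroup.of s)⁻¹ := rfl
    rw [this, map_inv, eta_of]
    rfl
  · have : elt Γ ((s, true) : V × Bool) = PresentedGroup.of s := rfl
    rw [this, eta_of]
    rfl

lemma eta_run (w : List (V × Bool)) :
    ((eta Γ (raagPi Γ w) (emptyQR Γ) : QR Γ)).1 = mkQ Γ (run Γ w) := by
  induction w with
  | nil => simp [run, raagPi_nil, map_one]; rfl
  | cons x w ih =>
    rw [raagPi_cons, map_mul]
    show ((eta Γ (elt Γ x)) ((eta Γ (raagPi Γ w)) (emptyQR Γ))).1 = _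
    rw [eta_elt]
    show pushT Γ x ((eta Γ (raagPi Γ w)) (emptyQR Γ)).1 = _
    rw [ih]
    simp [run]

lemma length_run_le (w : List (V × Bool)) : (run Γ w).length ≤ w.length := by
  induction w with
  | nil => simp [run]
  | cons x w ih =>
    calc (push Γ x (run Γ w)).length ≤ (run Γ w).length + 1 := length_push_le Γ x _
    _ ≤ w.length + 1 := by omega

lemma seq_run_of_redR {w : List (V × Bool)} (h : RedR Γ w) : SEq Γ (run Γ w) w := by
  induction w with
  | nil => exact SEq.refl' Γ _
  | cons x w ih =>
    obtain ⟨h1, h2⟩ := h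
    have hs : SEq Γ (push Γ x (run Γ w)) (push Γ x w) := seq_push Γ x (ih h2)
    refine hs.trans' Γ ?_
    obtain ⟨a, b, rfl, ha, hp⟩ := push_of_not_canc Γ h1
    rw [hp]
    exact (seq_shuffle Γ x a b ha).symm' Γ

/-- the main hard direction: reduced words are geodesic -/
lemma redR_length_le {w w' : List (V × Bool)} (h : RedR Γ w)
    (hpi : raagPi Γ w' = raagPi Γ w) : w.length ≤ w'.length := by
  have h1 : mkQ Γ (run Γ w') = mkQ Γ (run Γ w) := by
    rw [← eta_run, ← eta_run, hpi]
  have h2 : SEq Γ (run Γ w') (run Γ w) := Quotient.exact h1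
  have h3 := h2.length_eq Γ
  have h4 := (seq_run_of_redR Γ h).length_eq Γ
  have h5 := length_run_le Γ w'
  omega

end RaagAux

namespace RaagAux

variable {V : Type*} (Γ : SimpleGraph V) [DecidableEq V] [DecidableRel Γ.Adj]

lemma exists_shorter_of_not_redR {w : List (V × Bool)} (h : ¬ RedR Γ w) :
    ∃ w', raagPi Γ w' = raagPi Γ w ∧ w'.length + 2 = w.length := by
  induction w with
  | nil => exact absurd trivial h
  | cons x w ih =>
    rw [redR_cons] at h
    push_neg at h
    by_cases hc : canc Γ x w
    · obtain ⟨a, b, rfl, ha, _⟩ := push_of_canc Γ hc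
      refine ⟨a ++ b, ?_, by simp; omega⟩
      have := pi_cancel Γ (x := x) (a := []) (b := a) (c := b) ha
      simpa using this.symm
    · obtain ⟨w', hpi, hlen⟩ := ih (h hc)
      exact ⟨x :: w', by simp [hpi], by simp [← hlen]⟩

lemma geodesic_iff_redR (w : List (V × Bool)) :
    raagIsGeodesic Γ w ↔ RedR Γ w := by
  constructor
  · intro hg
    by_contra h
    obtain ⟨w', hpi, hlen⟩ := exists_shorter_of_not_redR Γ h
    have := hg w' hpi
    omega
  · intro h w' hpi
    exact redR_length_le Γ h hpi

section Counting

variable [Fintype V]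

/-- state update: letters still visible from the left after prepending `x` -/
def upd (x : V × Bool) (S : Finset (V × Bool)) : Finset (V × Bool) :=
  insert x (S.filter fun y => Γ.Adj x.1 y.1)

/-- the set of letters visible from the left -/
def stt : List (V × Bool) → Finset (V × Bool)
  | [] => ∅
  | x :: w => upd Γ x (stt w)

lemma canc_iff_mem_stt (x : V × Bool) (w : List (V × Bool)) :
    canc Γ x w ↔ linv x ∈ stt Γ w := by
  induction w with
  | nil => simp [stt]
  | cons y w ih =>
    simp only [canc_cons, stt, upd, Finset.mem_insert, Finset.mem_filter, ih]
    constructor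
    · rintro (h | ⟨h1, h2⟩)
      · exact Or.inl h.symm
      · exact Or.inr ⟨h2, h1.symm⟩
    · rintro (h | ⟨h1, h2⟩)
      · exact Or.inl h.symm
      · exact Or.inr ⟨h2.symm, h1⟩
  
lemma redR_cons_stt (x : V × Bool) (w : List (V × Bool)) :
    RedR Γ (x :: w) ↔ linv x ∉ stt Γ w ∧ RedR Γ w := by
  rw [redR_cons, canc_iff_mem_stt]

/-- abstract chains in the state automaton -/
def chain : Finset (V × Bool) → List (V × Bool) → Prop
  | _, [] => True
  | S, x :: l => linv x ∉ S ∧ chain (upd Γ x S) l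

lemma chain_iff_redR : ∀ (l w₀ : List (V × Bool)), RedR Γ w₀ →
    (chain Γ (stt Γ w₀) l ↔ RedR Γ (l.reverse ++ w₀)) := by
  intro l
  induction l with
  | nil => intro w₀ h; simpa [chain] using h
  | cons x l ih =>
    intro w₀ h
    have heq : (x :: l).reverse ++ w₀ = l.reverse ++ (x :: w₀) := by
      simp
    rw [heq]
    show (linv x ∉ stt Γ w₀ ∧ chain Γ (upd Γ x (stt Γ w₀)) l) ↔ _
    constructor
    · rintro ⟨h1, h2⟩
      have hred : RedR Γ (x :: w₀) := (redR_cons_stt Γ x w₀).mpr ⟨h1, h⟩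
      exact (ih (x :: w₀) hred).mp h2
    · intro hred
      have hxw : RedR Γ (x :: w₀) := RedR.tail_suffix Γ l.reverse _ hred
      have h1 := (redR_cons_stt Γ x w₀).mp hxw
      exact ⟨h1.1, (ih (x :: w₀) hxw).mpr hred⟩

/-- the transition count function -/
def gcount : ℕ → Finset (V × Bool) → ℕ
  | 0, _ => 1
  | n + 1, S => ∑ x ∈ Finset.univ.filter (fun x : V × Bool => linv x ∉ S),
      gcount n (upd Γ x S)

lemma gcount_succ (n : ℕ) (S : Finset (V × Bool)) :
    gcount Γ (n + 1) S = ∑ x ∈ Finset.univ.filter (fun x : V × Bool => linv x ∉ S),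
      gcount Γ n (upd Γ x S) := rfl

instance chainFinite (S : Finset (V × Bool)) (n : ℕ) :
    Finite {l : List (V × Bool) // chain Γ S l ∧ l.length = n} := by
  refine Finite.of_injective
    (fun l => (fun i : Fin n => l.1.get (Fin.cast l.2.2.symm i))) ?_
  intro a b h
  have ha := a.2.2
  have hb := b.2.2
  refine Subtype.ext ?_
  refine List.ext_get (by omega) ?_
  intro i hi1 hi2
  have := congrFun h ⟨i, by omega⟩
  simpa using this

lemma nat_card_sigma {ι : Type*} [Fintype ι] (f : ι → Type*) [∀ i, Finite (f i)] :
    Nat.card (Σ i, f i) = ∑ i, Nat.card (f i) := by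
  have : ∀ i, Fintype (f i) := fun i => Fintype.ofFinite (f i)
  simp only [Nat.card_eq_fintype_card]
  exact Fintype.card_sigma

lemma card_chain (n : ℕ) : ∀ S : Finset (V × Bool),
    Nat.card {l : List (V × Bool) // chain Γ S l ∧ l.length = n} = gcount Γ n S := by
  induction n with
  | zero =>
    intro S
    rw [show gcount Γ 0 S = 1 from rfl]
    have : Unique {l : List (V × Bool) // chain Γ S l ∧ l.length = 0} := by
      refine ⟨⟨⟨[], trivial, rfl⟩⟩, ?_⟩
      rintro ⟨l, hc, hl⟩
      refine Subtype.ext ?_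
      exact List.length_eq_zero_iff.mp hl
    exact Nat.card_unique
  | succ n ih =>
    intro S
    have E : {l : List (V × Bool) // chain Γ S l ∧ l.length = n + 1} ≃
        (Σ x : {x : V × Bool // linv x ∉ S},
          {l : List (V × Bool) // chain Γ (upd Γ x.1 S) l ∧ l.length = n}) := by
      refine ⟨?_, ?_, ?_, ?_⟩
      · rintro ⟨l, hc, hl⟩
        cases l with
        | nil => exact absurd hl (by simp)
        | cons x l => exact ⟨⟨x, hc.1⟩, ⟨l, hc.2, by simpa using hl⟩⟩
      · rintro ⟨⟨x, hx⟩, ⟨l, hc, hl⟩⟩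
        exact ⟨x :: l, ⟨hx, hc⟩, by simpa using hl⟩
      · rintro ⟨l, hc, hl⟩
        cases l with
        | nil => exact absurd hl (by simp)
        | cons x l => rfl
      · rintro ⟨⟨x, hx⟩, ⟨l, hc, hl⟩⟩
        rfl
    rw [Nat.card_congr E, nat_card_sigma]
    rw [show gcount Γ (n+1) S = ∑ x ∈ Finset.univ.filter
      (fun x : V × Bool => linv x ∉ S), gcount Γ n (upd Γ x S) from rfl]
    rw [← Finset.sum_coe_sort (Finset.univ.filter (fun x : V × Bool => linv x ∉ S))
      (fun x => gcount Γ n (upd Γ x S))]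
    refine Finset.sum_equiv (Equiv.subtypeEquivRight ?_) ?_ ?_
    · intro x
      simp
    · intro x
      simp
    · rintro ⟨x, hx⟩ _
      simp only [Equiv.subtypeEquivRight_apply]
      exact ih (upd Γ x S)

/-- the geodesic growth function equals the automaton count -/
lemma growth_eq_gcount (n : ℕ) : raagGeodesicGrowth Γ n = gcount Γ n ∅ := by
  rw [raagGeodesicGrowth, ← card_chain Γ n ∅]
  refine Nat.card_congr ?_
  refine ⟨?_, ?_, ?_, ?_⟩
  · rintro ⟨w, hg, hl⟩
    refine ⟨w.reverse, ?_, by simpa using hl⟩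
    have : RedR Γ w := (geodesic_iff_redR Γ w).mp hg
    have h0 : stt Γ [] = ∅ := rfl
    rw [← h0]
    rw [chain_iff_redR Γ w.reverse [] (redR_nil Γ)]
    simpa using this
  · rintro ⟨l, hc, hl⟩
    refine ⟨l.reverse, ?_, by simpa using hl⟩
    rw [geodesic_iff_redR]
    have h0 : stt Γ [] = ∅ := rfl
    rw [← h0] at hc
    have := (chain_iff_redR Γ l [] (redR_nil Γ)).mp hc
    simpa using this
  · rintro ⟨w, hg, hl⟩
    simp
  · rintro ⟨l, hc, hl⟩
    simp

end Counting

end RaagAux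

namespace RaagAux

variable {V : Type*} (Γ : SimpleGraph V) [DecidableEq V] [DecidableRel Γ.Adj] [Fintype V]

/-- good states: pairwise adjacent letters -/
def goodS (S : Finset (V × Bool)) : Prop :=
  ∀ x ∈ S, ∀ y ∈ S, x ≠ y → Γ.Adj x.1 y.1

lemma goodS_empty : goodS Γ (∅ : Finset (V × Bool)) := by
  intro x hx
  simp at hx

lemma goodS_fst_injOn {S : Finset (V × Bool)} (h : goodS Γ S) :
    Set.InjOn Prod.fst (S : Set (V × Bool)) := by
  intro x hx y hy hxy
  by_contra hne
  exact Γ.irrefl (hxy ▸ h x hx y hy hne)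

lemma goodS_card_image {S : Finset (V × Bool)} (h : goodS Γ S) :
    (S.image Prod.fst).card = S.card :=
  Finset.card_image_of_injOn (goodS_fst_injOn Γ h)

lemma goodS_clique {S : Finset (V × Bool)} (h : goodS Γ S) :
    Γ.IsClique ((S.image Prod.fst : Finset V) : Set V) := by
  intro u hu v hv huv
  simp only [Finset.coe_image, Set.mem_image, Finset.mem_coe] at hu hv
  obtain ⟨x, hx, rfl⟩ := hu
  obtain ⟨y, hy, rfl⟩ := hv
  exact h x hx y hy (fun hxy => huv (by rw [hxy]))

lemma upd_goodS {S : Finset (V × Bool)} (h : goodS Γ S) (x : V × Bool) :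
    goodS Γ (upd Γ x S) := by
  intro a ha b hb hab
  simp only [upd, Finset.mem_insert, Finset.mem_filter] at ha hb
  rcases ha with rfl | ⟨ha, hadj⟩
  · rcases hb with rfl | ⟨hb, hbadj⟩
    · exact absurd rfl hab
    · exact hbadj
  · rcases hb with rfl | ⟨hb, hbadj⟩
    · exact (Γ.adj_symm hadj)
    · exact h a ha b hb hab

lemma upd_of_mem {S : Finset (V × Bool)} (h : goodS Γ S) {x : V × Bool} (hx : x ∈ S) :
    upd Γ x S = S := by
  ext y
  simp only [upd, Finset.mem_insert, Finset.mem_filter]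
  constructor
  · rintro (rfl | ⟨hy, _⟩)
    · exact hx
    · exact hy
  · intro hy
    by_cases hxy : y = x
    · exact Or.inl hxy
    · exact Or.inr ⟨hy, h x hx y hy (fun e => hxy e.symm)⟩

lemma upd_card_of_not_mem {S : Finset (V × Bool)} (h : goodS Γ S) {x : V × Bool}
    (hx : x.1 ∉ S.image Prod.fst) :
    (upd Γ x S).card = ((S.image Prod.fst).filter (Γ.Adj x.1 ·)).card + 1 := by
  have h1 : x ∉ S.filter fun y => Γ.Adj x.1 y.1 := by
    intro hx'
    exact hx (Finset.mem_image_of_mem _ (Finset.mem_of_mem_filter _ hx'))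
  rw [upd, Finset.card_insert_of_notMem h1]
  congr 1
  have h2 : (S.filter fun y => Γ.Adj x.1 y.1).image Prod.fst =
      (S.image Prod.fst).filter (Γ.Adj x.1 ·) := by
    ext v
    simp only [Finset.mem_image, Finset.mem_filter]
    constructor
    · rintro ⟨y, ⟨hy, hadj⟩, rfl⟩
      exact ⟨⟨y, hy, rfl⟩, hadj⟩
    · rintro ⟨⟨y, hy, rfl⟩, hadj⟩
      exact ⟨y, ⟨hy, hadj⟩, rfl⟩
  rw [← h2, Finset.card_image_of_injOn
    ((goodS_fst_injOn Γ h).mono (fun y hy => Finset.mem_of_mem_filter _ hy))]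

/-- the allowed letters split into self-loops and outward moves -/
lemma allowed_split {S : Finset (V × Bool)} (h : goodS Γ S) :
    Finset.univ.filter (fun x : V × Bool => linv x ∉ S) =
      S ∪ Finset.univ.filter (fun x : V × Bool => x.1 ∉ S.image Prod.fst) := by
  ext x
  simp only [Finset.mem_filter, Finset.mem_univ, true_and, Finset.mem_union]
  constructor
  · intro hx
    by_cases hv : x.1 ∈ S.image Prod.fst
    · left
      obtain ⟨y, hy, hyx⟩ := Finset.mem_image.mp hv
      by_cases hb : y.2 = x.2
      · have : y = x := Prod.ext hyx hb
        exact this ▸ hy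
      · have hb2 : y.2 = !x.2 := by
          cases hx2 : x.2 <;> cases hy2 : y.2 <;> simp_all
        have : y = linv x := Prod.ext hyx hb2
        exact absurd (this ▸ hy) hx
    · exact Or.inr hv
  · rintro (hx | hx)
    · intro hlinv
      have hne : linv x ≠ x := linv_ne x
      exact Γ.irrefl (h (linv x) hlinv x hx hne : Γ.Adj x.1 x.1)
    · intro hlinv
      exact hx (by simpa using Finset.mem_image_of_mem Prod.fst hlinv)

lemma allowed_disjoint {S : Finset (V × Bool)} :
    Disjoint S (Finset.univ.filter (fun x : V × Bool => x.1 ∉ S.image Prod.fst)) := by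
  rw [Finset.disjoint_left]
  intro x hx hx'
  simp only [Finset.mem_filter] at hx'
  exact hx'.2 (Finset.mem_image_of_mem _ hx)

section InclExcl

/-- number of outside vertices with a given number of neighbours in `σ` -/
def NsetF (σ : Finset V) (j : ℕ) : Finset V :=
  Finset.univ.filter fun v => v ∉ σ ∧ (σ.filter (Γ.Adj v ·)).card = j

def Bcard (σ τ : Finset V) : ℕ :=
  (Finset.univ.filter fun v => v ∉ σ ∧ ∀ u ∈ τ, Γ.Adj v u).card

lemma NsetF_empty_of_gt {σ : Finset V} {j : ℕ} (h : σ.card < j) : NsetF Γ σ j = ∅ := by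
  rw [Finset.eq_empty_iff_forall_notMem]
  intro v hv
  simp only [NsetF, Finset.mem_filter] at hv
  have := Finset.card_filter_le σ (Γ.Adj v ·)
  omega

/-- double counting pairs (τ, v) -/
lemma double_count (σ : Finset V) (j : ℕ) :
    ∑ τ ∈ σ.powersetCard j, Bcard Γ σ τ =
      ∑ i ∈ Finset.range (σ.card + 1), (NsetF Γ σ i).card * i.choose j := by
  have lhs : ∑ τ ∈ σ.powersetCard j, Bcard Γ σ τ =
      ∑ τ ∈ σ.powersetCard j, ∑ v ∈ Finset.univ.filter (· ∉ σ),
        if ∀ u ∈ τ, Γ.Adj v u then 1 else 0 := by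
    refine Finset.sum_congr rfl fun τ _ => ?_
    rw [Bcard]
    rw [Finset.card_filter]
    rw [← Finset.sum_filter_add_sum_filter_not Finset.univ (· ∉ σ)]
    have : ∑ v ∈ Finset.univ.filter (¬ · ∉ σ),
        (if v ∉ σ ∧ ∀ u ∈ τ, Γ.Adj v u then 1 else 0) = 0 := by
      refine Finset.sum_eq_zero fun v hv => ?_
      simp only [Finset.mem_filter, not_not] at hv
      simp [hv.2]
    rw [this, add_zero]
    refine Finset.sum_congr rfl fun v hv => ?_
    simp only [Finset.mem_filter] at hv
    simp [hv.2]
  rw [lhs, Finset.sum_comm]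
  have inner : ∀ v ∈ Finset.univ.filter (· ∉ σ),
      (∑ τ ∈ σ.powersetCard j, if ∀ u ∈ τ, Γ.Adj v u then 1 else 0) =
        ((σ.filter (Γ.Adj v ·)).card).choose j := by
    intro v _
    rw [← Finset.card_filter]
    rw [← Finset.card_powersetCard]
    congr 1
    ext τ
    simp only [Finset.mem_filter, Finset.mem_powersetCard]
    constructor
    · rintro ⟨⟨hsub, hcard⟩, hall⟩
      exact ⟨fun u hu => Finset.mem_filter.mpr ⟨hsub hu, hall u hu⟩, hcard⟩
    · rintro ⟨hsub, hcard⟩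
      refine ⟨⟨fun u hu => Finset.mem_of_mem_filter _ (hsub hu), hcard⟩, ?_⟩
      intro u hu
      exact (Finset.mem_filter.mp (hsub hu)).2
  rw [Finset.sum_congr rfl inner]
  have maps : ∀ v ∈ Finset.univ.filter (· ∉ σ),
      (σ.filter (Γ.Adj v ·)).card ∈ Finset.range (σ.card + 1) := by
    intro v _
    rw [Finset.mem_range]
    have := Finset.card_filter_le σ (Γ.Adj v ·)
    omega
  rw [← Finset.sum_fiberwise_of_maps_to maps
    (fun v => ((σ.filter (Γ.Adj v ·)).card).choose j)]
  refine Finset.sum_congr rfl fun i _ => ?_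
  have : ∀ v ∈ (Finset.univ.filter (· ∉ σ)).filter
      (fun v => (σ.filter (Γ.Adj v ·)).card = i), ((σ.filter (Γ.Adj v ·)).card).choose j
        = i.choose j := by
    intro v hv
    simp only [Finset.mem_filter] at hv
    rw [hv.2]
  rw [Finset.sum_congr rfl this, Finset.sum_const, smul_eq_mul]
  congr 1
  rw [NsetF, Finset.filter_filter]

end InclExcl

end RaagAux

namespace RaagAux

section Cross

variable {V : Type*} [DecidableEq V] [Fintype V] (Γ : SimpleGraph V) [DecidableRel Γ.Adj]

lemma Bval {σ τ : Finset V} (hτ : τ ⊆ σ) (hσ : Γ.IsClique (σ : Set V)) :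
    Bcard Γ σ τ + (σ \ τ).card = (graphLink Γ τ).card := by
  have hun : graphLink Γ τ =
      (Finset.univ.filter fun v => v ∉ σ ∧ ∀ u ∈ τ, Γ.Adj v u) ∪ (σ \ τ) := by
    ext v
    simp only [graphLink, Finset.mem_filter, Finset.mem_univ, true_and, Finset.mem_union,
      Finset.mem_sdiff]
    constructor
    · rintro ⟨hv, hadj⟩
      by_cases hvσ : v ∈ σ
      · exact Or.inr ⟨hvσ, hv⟩
      · exact Or.inl ⟨hvσ, hadj⟩
    · rintro (⟨hvσ, hadj⟩ | ⟨hvσ, hvτ⟩)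
      · exact ⟨fun hv => hvσ (hτ hv), hadj⟩
      · refine ⟨hvτ, fun u hu => ?_⟩
        have hne : v ≠ u := fun e => hvτ (e ▸ hu)
        exact hσ (Finset.mem_coe.mpr hvσ) (Finset.mem_coe.mpr (hτ hu)) hne
  have hdisj : Disjoint (Finset.univ.filter fun v => v ∉ σ ∧ ∀ u ∈ τ, Γ.Adj v u) (σ \ τ) := by
    rw [Finset.disjoint_left]
    intro v hv hv'
    simp only [Finset.mem_filter] at hv
    exact hv.2.1 (Finset.mem_sdiff.mp hv').1
  rw [hun, Finset.card_union_of_disjoint hdisj]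
  rfl

lemma graphLink_empty : graphLink Γ (∅ : Finset V) = Finset.univ := by
  ext v
  simp [graphLink]

end Cross

section TwoGraphs

variable {V₁ V₂ : Type*} [Fintype V₁] [DecidableEq V₁] [Fintype V₂] [DecidableEq V₂]
  (Γ₁ : SimpleGraph V₁) [DecidableRel Γ₁.Adj] (Γ₂ : SimpleGraph V₂) [DecidableRel Γ₂.Adj]
  (hV : Fintype.card V₁ = Fintype.card V₂)
  (hlinks : ∀ (σ₁ : Finset V₁) (σ₂ : Finset V₂),
      Γ₁.IsClique (σ₁ : Set V₁) → Γ₂.IsClique (σ₂ : Set V₂) →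
      σ₁.Nonempty → σ₂.Nonempty → σ₁.card = σ₂.card →
      (graphLink Γ₁ σ₁).card = (graphLink Γ₂ σ₂).card)

section FixedCliques

variable {σ₁ : Finset V₁} {σ₂ : Finset V₂}
  (hσ₁ : Γ₁.IsClique (σ₁ : Set V₁)) (hσ₂ : Γ₂.IsClique (σ₂ : Set V₂))
  (hk : σ₁.card = σ₂.card)

include hV hlinks hσ₁ hσ₂ hk

lemma crossB1 {τ₁ : Finset V₁} {τ₂ : Finset V₂} (hτ₁ : τ₁ ⊆ σ₁) (hτ₂ : τ₂ ⊆ σ₂)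
    (hj : τ₁.card = τ₂.card) : Bcard Γ₁ σ₁ τ₁ = Bcard Γ₂ σ₂ τ₂ := by
  have e1 := Bval Γ₁ hτ₁ hσ₁
  have e2 := Bval Γ₂ hτ₂ hσ₂
  have hL : (graphLink Γ₁ τ₁).card = (graphLink Γ₂ τ₂).card := by
    rcases Finset.eq_empty_or_nonempty τ₁ with rfl | hne
    · have hτ₂e : τ₂ = ∅ := by
        rw [← Finset.card_eq_zero, ← hj, Finset.card_empty]
      rw [hτ₂e, graphLink_empty, graphLink_empty, Finset.card_univ, Finset.card_univ, hV]
    · have hne2 : τ₂.Nonempty := by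
        rw [← Finset.card_pos, ← hj, Finset.card_pos]
        exact hne
      exact hlinks τ₁ τ₂ (hσ₁.subset (Finset.coe_subset.mpr hτ₁))
        (hσ₂.subset (Finset.coe_subset.mpr hτ₂)) hne hne2 hj
  have c1 : (σ₁ \ τ₁).card = σ₁.card - τ₁.card := Finset.card_sdiff_of_subset hτ₁
  have c2 : (σ₂ \ τ₂).card = σ₂.card - τ₂.card := Finset.card_sdiff_of_subset hτ₂
  omega

lemma crossSum (j : ℕ) :
    ∑ τ ∈ σ₁.powersetCard j, Bcard Γ₁ σ₁ τ = ∑ τ ∈ σ₂.powersetCard j, Bcard Γ₂ σ₂ τ := by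
  by_cases hjk : j ≤ σ₁.card
  · obtain ⟨τ₁0, hτ₁0, hcard₁0⟩ := Finset.exists_subset_card_eq hjk
    obtain ⟨τ₂0, hτ₂0, hcard₂0⟩ := Finset.exists_subset_card_eq (hk ▸ hjk)
    have hval : ∀ τ ∈ σ₁.powersetCard j, Bcard Γ₁ σ₁ τ = Bcard Γ₂ σ₂ τ₂0 := by
      intro τ hτ
      rw [Finset.mem_powersetCard] at hτ
      exact crossB1 Γ₁ Γ₂ hV hlinks hσ₁ hσ₂ hk hτ.1 hτ₂0 (by rw [hτ.2, hcard₂0])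
    have hval2 : ∀ τ ∈ σ₂.powersetCard j, Bcard Γ₂ σ₂ τ = Bcard Γ₂ σ₂ τ₂0 := by
      intro τ hτ
      rw [Finset.mem_powersetCard] at hτ
      have r1 : Bcard Γ₁ σ₁ τ₁0 = Bcard Γ₂ σ₂ τ :=
        crossB1 Γ₁ Γ₂ hV hlinks hσ₁ hσ₂ hk hτ₁0 hτ.1 (by rw [hcard₁0, hτ.2])
      have r2 : Bcard Γ₁ σ₁ τ₁0 = Bcard Γ₂ σ₂ τ₂0 :=
        crossB1 Γ₁ Γ₂ hV hlinks hσ₁ hσ₂ hk hτ₁0 hτ₂0 (by rw [hcard₁0, hcard₂0])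
      rw [← r1, r2]
    rw [Finset.sum_congr rfl hval, Finset.sum_congr rfl hval2]
    simp only [Finset.sum_const, smul_eq_mul]
    congr 1
    rw [Finset.card_powersetCard, Finset.card_powersetCard, hk]
  · have h1 : σ₁.powersetCard j = ∅ := by
      rw [Finset.powersetCard_eq_empty]
      omega
    have h2 : σ₂.powersetCard j = ∅ := by
      rw [Finset.powersetCard_eq_empty]
      omega
    rw [h1, h2]
    simp

lemma crossN : ∀ j, (NsetF Γ₁ σ₁ j).card = (NsetF Γ₂ σ₂ j).card := by
  have step : ∀ j, (∀ i, j < i → (NsetF Γ₁ σ₁ i).card = (NsetF Γ₂ σ₂ i).card) →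
      (NsetF Γ₁ σ₁ j).card = (NsetF Γ₂ σ₂ j).card := by
    intro j ihj
    by_cases hjk : σ₁.card < j
    · have hjk2 : σ₂.card < j := by omega
      rw [NsetF_empty_of_gt Γ₁ hjk, NsetF_empty_of_gt Γ₂ hjk2]
      simp
    · have h1 := double_count Γ₁ σ₁ j
      have h2 := double_count Γ₂ σ₂ j
      have hcross := crossSum Γ₁ Γ₂ hV hlinks hσ₁ hσ₂ hk j
      rw [h1, h2] at hcross
      rw [← hk] at hcross
      have hjmem : j ∈ Finset.range (σ₁.card + 1) := Finset.mem_range.mpr (by omega)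
      rw [← Finset.sum_erase_add _ _ hjmem, ← Finset.sum_erase_add _ _ hjmem] at hcross
      have herase : ∑ i ∈ (Finset.range (σ₁.card + 1)).erase j,
          (NsetF Γ₁ σ₁ i).card * i.choose j =
          ∑ i ∈ (Finset.range (σ₁.card + 1)).erase j,
            (NsetF Γ₂ σ₂ i).card * i.choose j := by
        refine Finset.sum_congr rfl fun i hi => ?_
        rw [Finset.mem_erase, Finset.mem_range] at hi
        rcases lt_or_gt_of_ne hi.1 with hlt | hgt
        · rw [Nat.choose_eq_zero_of_lt hlt, Nat.mul_zero, Nat.mul_zero]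
        · rw [ihj i hgt]
      rw [herase] at hcross
      have := Nat.add_left_cancel hcross
      simpa [Nat.choose_self] using this
  have main : ∀ m j, σ₁.card + 1 ≤ j + m → (NsetF Γ₁ σ₁ j).card = (NsetF Γ₂ σ₂ j).card := by
    intro m
    induction m with
    | zero =>
      intro j hj
      have hj2 : σ₂.card < j := by omega
      rw [NsetF_empty_of_gt Γ₁ (by omega), NsetF_empty_of_gt Γ₂ hj2]
      simp
    | succ m ihm =>
      intro j _
      exact step j fun i hi => ihm i (by omega)
  intro j
  exact main (σ₁.card + 1) j (by omega)

end FixedCliques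

include hV hlinks

/-- The main induction: the automaton counts agree on good states of equal size. -/
lemma gcount_cross (n : ℕ) : ∀ (S : Finset (V₁ × Bool)) (T : Finset (V₂ × Bool)),
    goodS Γ₁ S → goodS Γ₂ T → S.card = T.card →
    gcount Γ₁ n S = gcount Γ₂ n T := by
  induction n with
  | zero => intro S T _ _ _; rfl
  | succ n ih =>
    intro S T hS hT hcard
    classical
    have hcl1 : Γ₁.IsClique ((S.image Prod.fst : Finset V₁) : Set V₁) := goodS_clique Γ₁ hS
    have hcl2 : Γ₂.IsClique ((T.image Prod.fst : Finset V₂) : Set V₂) := goodS_clique Γ₂ hT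
    have hkk : (S.image Prod.fst).card = (T.image Prod.fst).card := by
      rw [goodS_card_image Γ₁ hS, goodS_card_image Γ₂ hT, hcard]
    have hN := crossN Γ₁ Γ₂ hV hlinks hcl1 hcl2 hkk
    rw [gcount_succ Γ₁ n S, gcount_succ Γ₂ n T]
    rw [allowed_split Γ₁ hS, allowed_split Γ₂ hT,
      Finset.sum_union allowed_disjoint, Finset.sum_union allowed_disjoint]
    have self₁ : ∑ x ∈ S, gcount Γ₁ n (upd Γ₁ x S) = S.card * gcount Γ₁ n S := by
      rw [Finset.sum_congr rfl fun x hx => by rw [upd_of_mem Γ₁ hS hx]]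
      rw [Finset.sum_const, smul_eq_mul]
    have self₂ : ∑ x ∈ T, gcount Γ₂ n (upd Γ₂ x T) = T.card * gcount Γ₂ n T := by
      rw [Finset.sum_congr rfl fun x hx => by rw [upd_of_mem Γ₂ hT hx]]
      rw [Finset.sum_const, smul_eq_mul]
    rw [self₁, self₂]
    have hmain : ih S T hS hT hcard = ih S T hS hT hcard := rfl
    congr 1
    · rw [hcard, ih S T hS hT hcard]
    -- outward sums
    set P : ℕ → Prop := fun c => ∃ T' : Finset (V₂ × Bool), goodS Γ₂ T' ∧ T'.card = c with hPdef
    set Gf : ℕ → ℕ := fun c => if h : P c then gcount Γ₂ n h.choose else 0 with hGdef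
    -- membership in NsetF from an outward letter
    have memN₁ : ∀ x : V₁ × Bool, x.1 ∉ (S.image Prod.fst) →
        x.1 ∈ NsetF Γ₁ (S.image Prod.fst) (((S.image Prod.fst).filter (Γ₁.Adj x.1 ·)).card) := by
      intro x hx
      rw [NsetF, Finset.mem_filter]
      exact ⟨Finset.mem_univ _, hx, rfl⟩
    have memN₂ : ∀ x : V₂ × Bool, x.1 ∉ (T.image Prod.fst) →
        x.1 ∈ NsetF Γ₂ (T.image Prod.fst) (((T.image Prod.fst).filter (Γ₂.Adj x.1 ·)).card) := by
      intro x hx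
      rw [NsetF, Finset.mem_filter]
      exact ⟨Finset.mem_univ _, hx, rfl⟩
    -- existence transfer
    have exT : ∀ (d : ℕ), (NsetF Γ₁ (S.image Prod.fst) d).Nonempty → P (d + 1) := by
      intro d hne
      have : (NsetF Γ₂ (T.image Prod.fst) d).Nonempty := by
        rw [← Finset.card_pos, ← hN d, Finset.card_pos]
        exact hne
      obtain ⟨v₂, hv₂⟩ := this
      simp only [NsetF, Finset.mem_filter, Finset.mem_univ, true_and] at hv₂
      refine ⟨upd Γ₂ (v₂, true) T, upd_goodS Γ₂ hT _, ?_⟩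
      rw [upd_card_of_not_mem Γ₂ hT (by exact hv₂.1)]
      rw [hv₂.2]
    have exS : ∀ (d : ℕ), (NsetF Γ₂ (T.image Prod.fst) d).Nonempty →
        ∃ S' : Finset (V₁ × Bool), goodS Γ₁ S' ∧ S'.card = d + 1 := by
      intro d hne
      have : (NsetF Γ₁ (S.image Prod.fst) d).Nonempty := by
        rw [← Finset.card_pos, hN d, Finset.card_pos]
        exact hne
      obtain ⟨v₁, hv₁⟩ := this
      simp only [NsetF, Finset.mem_filter, Finset.mem_univ, true_and] at hv₁
      refine ⟨upd Γ₁ (v₁, true) S, upd_goodS Γ₁ hS _, ?_⟩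
      rw [upd_card_of_not_mem Γ₁ hS (by exact hv₁.1)]
      rw [hv₁.2]
    -- values of the outward transitions
    have claim1 : ∀ x ∈ Finset.univ.filter (fun x : V₁ × Bool => x.1 ∉ (S.image Prod.fst)),
        gcount Γ₁ n (upd Γ₁ x S) = Gf ((upd Γ₁ x S).card) := by
      intro x hx
      rw [Finset.mem_filter] at hx
      have hcardupd : (upd Γ₁ x S).card = ((S.image Prod.fst).filter (Γ₁.Adj x.1 ·)).card + 1 :=
        upd_card_of_not_mem Γ₁ hS hx.2
      have hP : P ((upd Γ₁ x S).card) := by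
        rw [hcardupd]
        exact exT _ ⟨x.1, memN₁ x hx.2⟩
      rw [hGdef]
      simp only
      rw [dif_pos hP]
      have hspec := hP.choose_spec
      exact ih (upd Γ₁ x S) hP.choose (upd_goodS Γ₁ hS x) hspec.1 hspec.2.symm
    have claim2 : ∀ x ∈ Finset.univ.filter (fun x : V₂ × Bool => x.1 ∉ (T.image Prod.fst)),
        gcount Γ₂ n (upd Γ₂ x T) = Gf ((upd Γ₂ x T).card) := by
      intro x hx
      rw [Finset.mem_filter] at hx
      have hcardupd : (upd Γ₂ x T).card = ((T.image Prod.fst).filter (Γ₂.Adj x.1 ·)).card + 1 :=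
        upd_card_of_not_mem Γ₂ hT hx.2
      have hP : P ((upd Γ₂ x T).card) := ⟨upd Γ₂ x T, upd_goodS Γ₂ hT x, rfl⟩
      obtain ⟨S', hS', hScard⟩ := exS _ ⟨x.1, memN₂ x hx.2⟩
      rw [hGdef]
      simp only
      rw [dif_pos hP]
      have hspec := hP.choose_spec
      have e1 : gcount Γ₁ n S' = gcount Γ₂ n (upd Γ₂ x T) :=
        ih S' _ hS' (upd_goodS Γ₂ hT x) (by rw [hScard, hcardupd])
      have e2 : gcount Γ₁ n S' = gcount Γ₂ n hP.choose :=
        ih S' _ hS' hspec.1 (by rw [hScard, hspec.2, hcardupd])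
      rw [← e1, e2]
    rw [Finset.sum_congr rfl claim1, Finset.sum_congr rfl claim2]
    -- now compare the two sums fiberwise
    have hone : ∀ (x : V₁ × Bool), x.1 ∉ (S.image Prod.fst) →
        (upd Γ₁ x S).card = ((S.image Prod.fst).filter (Γ₁.Adj x.1 ·)).card + 1 := fun x hx =>
      upd_card_of_not_mem Γ₁ hS hx
    have maps₁ : ∀ x ∈ Finset.univ.filter (fun x : V₁ × Bool => x.1 ∉ (S.image Prod.fst)),
        (upd Γ₁ x S).card ∈ Finset.range (S.card + 2) := by
      intro x hx
      rw [Finset.mem_filter] at hx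
      rw [hone x hx.2, Finset.mem_range]
      have h1 : ((S.image Prod.fst).filter (Γ₁.Adj x.1 ·)).card ≤ (S.image Prod.fst).card := Finset.card_filter_le _ _
      have h2 : (S.image Prod.fst).card = S.card := goodS_card_image Γ₁ hS
      omega
    have maps₂ : ∀ x ∈ Finset.univ.filter (fun x : V₂ × Bool => x.1 ∉ (T.image Prod.fst)),
        (upd Γ₂ x T).card ∈ Finset.range (S.card + 2) := by
      intro x hx
      rw [Finset.mem_filter] at hx
      rw [upd_card_of_not_mem Γ₂ hT hx.2, Finset.mem_range]
      have h1 : ((T.image Prod.fst).filter (Γ₂.Adj x.1 ·)).card ≤ (T.image Prod.fst).card := Finset.card_filter_le _ _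
      have h2 : (T.image Prod.fst).card = T.card := goodS_card_image Γ₂ hT
      omega
    rw [← Finset.sum_fiberwise_of_maps_to maps₁ (fun x => Gf ((upd Γ₁ x S).card)),
      ← Finset.sum_fiberwise_of_maps_to maps₂ (fun x => Gf ((upd Γ₂ x T).card))]
    refine Finset.sum_congr rfl fun c hc => ?_
    have fib₁ : ∑ x ∈ (Finset.univ.filter (fun x : V₁ × Bool => x.1 ∉ (S.image Prod.fst))).filter
        (fun x => (upd Γ₁ x S).card = c), Gf ((upd Γ₁ x S).card) =
        ((Finset.univ.filter (fun x : V₁ × Bool => x.1 ∉ (S.image Prod.fst))).filter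
          (fun x => (upd Γ₁ x S).card = c)).card * Gf c := by
      rw [Finset.sum_congr rfl fun x hx => by
        rw [(Finset.mem_filter.mp hx).2], Finset.sum_const, smul_eq_mul]
    have fib₂ : ∑ x ∈ (Finset.univ.filter (fun x : V₂ × Bool => x.1 ∉ (T.image Prod.fst))).filter
        (fun x => (upd Γ₂ x T).card = c), Gf ((upd Γ₂ x T).card) =
        ((Finset.univ.filter (fun x : V₂ × Bool => x.1 ∉ (T.image Prod.fst))).filter
          (fun x => (upd Γ₂ x T).card = c)).card * Gf c := by
      rw [Finset.sum_congr rfl fun x hx => by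
        rw [(Finset.mem_filter.mp hx).2], Finset.sum_const, smul_eq_mul]
    rw [fib₁, fib₂]
    congr 1
    -- fiber cardinalities agree
    rcases Nat.eq_zero_or_pos c with rfl | hcpos
    · have e₁ : (Finset.univ.filter (fun x : V₁ × Bool => x.1 ∉ (S.image Prod.fst))).filter
          (fun x => (upd Γ₁ x S).card = 0) = ∅ := by
        rw [Finset.eq_empty_iff_forall_notMem]
        intro x hx
        rw [Finset.mem_filter, Finset.mem_filter] at hx
        have := hone x hx.1.2
        omega
      have e₂ : (Finset.univ.filter (fun x : V₂ × Bool => x.1 ∉ (T.image Prod.fst))).filter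
          (fun x => (upd Γ₂ x T).card = 0) = ∅ := by
        rw [Finset.eq_empty_iff_forall_notMem]
        intro x hx
        rw [Finset.mem_filter, Finset.mem_filter] at hx
        have := upd_card_of_not_mem Γ₂ hT hx.1.2
        omega
      rw [e₁, e₂]
      simp
    · have e₁ : (Finset.univ.filter (fun x : V₁ × Bool => x.1 ∉ (S.image Prod.fst))).filter
          (fun x => (upd Γ₁ x S).card = c) =
          (NsetF Γ₁ (S.image Prod.fst) (c - 1)) ×ˢ (Finset.univ : Finset Bool) := by
        ext x
        rw [Finset.mem_product]
        simp only [Finset.mem_filter, Finset.mem_univ, true_and, and_true, NsetF]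
        constructor
        · rintro ⟨h1, h2⟩
          rw [hone x h1] at h2
          exact ⟨h1, by omega⟩
        · rintro ⟨h1, h2⟩
          refine ⟨h1, ?_⟩
          rw [hone x h1]
          omega
      have e₂ : (Finset.univ.filter (fun x : V₂ × Bool => x.1 ∉ (T.image Prod.fst))).filter
          (fun x => (upd Γ₂ x T).card = c) =
          (NsetF Γ₂ (T.image Prod.fst) (c - 1)) ×ˢ (Finset.univ : Finset Bool) := by
        ext x
        rw [Finset.mem_product]
        simp only [Finset.mem_filter, Finset.mem_univ, true_and, and_true, NsetF]
        constructor
        · rintro ⟨h1, h2⟩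
          rw [upd_card_of_not_mem Γ₂ hT h1] at h2
          exact ⟨h1, by omega⟩
        · rintro ⟨h1, h2⟩
          refine ⟨h1, ?_⟩
          rw [upd_card_of_not_mem Γ₂ hT h1]
          omega
      rw [e₁, e₂, Finset.card_product, Finset.card_product, hN (c - 1)]

end TwoGraphs

end RaagAux

namespace RaagAux

lemma card_cliques_one {V : Type*} [Fintype V] [DecidableEq V] (Γ : SimpleGraph V)
    [DecidableRel Γ.Adj] :
    Nat.card {σ : Finset V // Γ.IsClique (σ : Set V) ∧ σ.card = 1} = Fintype.card V := by
  rw [← Nat.card_eq_fintype_card]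
  refine Nat.card_congr (Equiv.symm (Equiv.ofBijective
    (fun v => ⟨{v}, ?_, Finset.card_singleton v⟩) ⟨?_, ?_⟩))
  · simp only [Finset.coe_singleton]
    exact Set.pairwise_singleton v Γ.Adj
  · intro u v huv
    have : ({u} : Finset V) = {v} := congrArg Subtype.val huv
    exact Finset.singleton_injective this
  · rintro ⟨σ, hcl, hc⟩
    obtain ⟨a, rfl⟩ := Finset.card_eq_one.mp hc
    exact ⟨a, rfl⟩

end RaagAux


/-- Two link-regular graphs with the same number of cliques of each size, and
with same-size cliques having links of equal cardinality, define right-angled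
Artin groups with identical geodesic growth functions with respect to the
generating sets `S ∪ S⁻¹`. -/
theorem raag_geodesicGrowth_eq {V₁ V₂ : Type*} [Fintype V₁] [DecidableEq V₁]
    [Fintype V₂] [DecidableEq V₂]
    (Γ₁ : SimpleGraph V₁) [DecidableRel Γ₁.Adj] (Γ₂ : SimpleGraph V₂)
    [DecidableRel Γ₂.Adj]
    (h₁ : LinkRegular Γ₁) (h₂ : LinkRegular Γ₂)
    (hcliques : ∀ k : ℕ, 1 ≤ k →
      Nat.card {σ : Finset V₁ // Γ₁.IsClique (σ : Set V₁) ∧ σ.card = k} =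
      Nat.card {σ : Finset V₂ // Γ₂.IsClique (σ : Set V₂) ∧ σ.card = k})
    (hlinks : ∀ (σ₁ : Finset V₁) (σ₂ : Finset V₂),
      Γ₁.IsClique (σ₁ : Set V₁) → Γ₂.IsClique (σ₂ : Set V₂) →
      σ₁.Nonempty → σ₂.Nonempty → σ₁.card = σ₂.card →
      (graphLink Γ₁ σ₁).card = (graphLink Γ₂ σ₂).card) :
    ∀ n : ℕ, raagGeodesicGrowth Γ₁ n = raagGeodesicGrowth Γ₂ n := by
  have hV : Fintype.card V₁ = Fintype.card V₂ := by
    rw [← RaagAux.card_cliques_one Γ₁, ← RaagAux.card_cliques_one Γ₂]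
    exact hcliques 1 le_rfl
  intro n
  rw [RaagAux.growth_eq_gcount Γ₁ n, RaagAux.growth_eq_gcount Γ₂ n]
  exact RaagAux.gcount_cross Γ₁ Γ₂ hV hlinks n ∅ ∅
    (RaagAux.goodS_empty Γ₁) (RaagAux.goodS_empty Γ₂) rfl
end

section
/- Let Γ be a finite simple graph and Γ² its double. If σ′ is a clique of Γ², then its projection σ = {v ∈ VΓ : (v,i) ∈ σ′ for some i} is a clique of Γ with |σ| = |σ′|, and |Link_{Γ²}(σ′)| = 2·|Link_Γ(σ)|. -/
/-- The double of a graph: two copies of each vertex, with `(u,i)` adjacent to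
`(v,j)` iff `u` is adjacent to `v` (in particular the two copies of a vertex
are not adjacent). -/
def graphDouble {V : Type*} (Γ : SimpleGraph V) : SimpleGraph (V × Bool) where
  Adj x y := Γ.Adj x.1 y.1
  symm := ⟨fun _ _ h => Γ.adj_symm h⟩
  loopless := ⟨fun x h => Γ.loopless.irrefl x.1 h⟩

instance {V : Type*} (Γ : SimpleGraph V) [DecidableRel Γ.Adj] :
    DecidableRel (graphDouble Γ).Adj := fun x y => inferInstanceAs (Decidable (Γ.Adj x.1 y.1))

/-- If `σ'` is a clique of the double of `Γ`, then its projection `σ` to `VΓ`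
is a clique of `Γ` of the same size, and `|Link_{Γ²}(σ')| = 2·|Link_Γ(σ)|`. -/
theorem graphDouble_clique_proj {V : Type*} [Fintype V] [DecidableEq V]
    (Γ : SimpleGraph V) [DecidableRel Γ.Adj]
    (σ' : Finset (V × Bool))
    (hσ' : (graphDouble Γ).IsClique (σ' : Set (V × Bool))) :
    Γ.IsClique ((σ'.image Prod.fst : Finset V) : Set V) ∧
    (σ'.image Prod.fst).card = σ'.card ∧
    (graphLink (graphDouble Γ) σ').card = 2 * (graphLink Γ (σ'.image Prod.fst)).card := by
  have hinj : Set.InjOn Prod.fst (σ' : Set (V × Bool)) := by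
    intro a ha b hb hab
    by_contra hne
    have h : Γ.Adj a.1 b.1 := hσ' ha hb hne
    rw [hab] at h
    exact Γ.loopless.irrefl b.1 h
  have hclique : Γ.IsClique ((σ'.image Prod.fst : Finset V) : Set V) := by
    intro x hx y hy hxy
    simp only [Finset.coe_image, Set.mem_image, Finset.mem_coe] at hx hy
    obtain ⟨a, ha, rfl⟩ := hx
    obtain ⟨b, hb, rfl⟩ := hy
    exact hσ' ha hb (fun h => hxy (by rw [h]))
  have hlink : graphLink (graphDouble Γ) σ'
      = (graphLink Γ (σ'.image Prod.fst)) ×ˢ Finset.univ := by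
    ext ⟨v, i⟩
    simp only [graphLink, Finset.mem_filter, Finset.mem_univ, true_and,
      Finset.mem_product, Finset.mem_image, and_true]
    constructor
    · rintro ⟨hnm, hadj⟩
      refine ⟨?_, fun u hu => ?_⟩
      · rintro ⟨⟨w, j⟩, hw, rfl⟩
        exact Γ.loopless.irrefl w (hadj _ hw)
      · obtain ⟨⟨w, j⟩, hw, rfl⟩ := hu
        exact hadj _ hw
    · rintro ⟨hnm, hadj⟩
      refine ⟨fun h => hnm ⟨(v, i), h, rfl⟩, fun u hu => hadj u.1 ⟨u, hu, rfl⟩⟩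
  refine ⟨hclique, Finset.card_image_of_injOn hinj, ?_⟩
  rw [hlink, Finset.card_product]
  simp [mul_comm]
end

section
/- Let Γ be a finite simple link-regular graph. Then for any two cliques σ and σ′ of Γ with |σ| = |σ′| and any j ≥ 1, the number of cliques of size j contained in Link(σ) equals the number of cliques of size j contained in Link(σ′). (Equivalently, the induced subgraphs on Link(σ) and Link(σ′) have the same f-polynomial, so link-regularity implies K-link-regularity.) -/
section Aux
variable {V : Type*} [Fintype V] [DecidableEq V] (Γ : SimpleGraph V) [DecidableRel Γ.Adj]

/-- Number of `j`-cliques contained in `s`. -/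
def cliqueCount (j : ℕ) (s : Finset V) : ℕ :=
  (Finset.univ.filter fun π : Finset V =>
    Γ.IsClique (π : Set V) ∧ π.card = j ∧ π ⊆ s).card

lemma mem_graphLink {σ : Finset V} {v : V} :
    v ∈ graphLink Γ σ ↔ v ∉ σ ∧ ∀ u ∈ σ, Γ.Adj v u := by
  simp [graphLink]

lemma graphLink_insert (σ : Finset V) (v : V) :
    graphLink Γ (insert v σ) = (graphLink Γ σ).filter (fun w => Γ.Adj w v) := by
  ext w
  simp only [graphLink, Finset.mem_filter, Finset.mem_univ, true_and, Finset.mem_insert]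
  constructor
  · rintro ⟨h1, h2⟩
    exact ⟨⟨fun hw => h1 (Or.inr hw), fun u hu => h2 u (Or.inr hu)⟩, h2 v (Or.inl rfl)⟩
  · rintro ⟨⟨h1, h2⟩, h3⟩
    refine ⟨?_, ?_⟩
    · rintro (rfl | hw)
      · exact h3.ne rfl
      · exact h1 hw
    · rintro u (rfl | hu)
      · exact h3
      · exact h2 u hu

lemma cliqueCount_one (s : Finset V) : cliqueCount Γ 1 s = s.card := by
  unfold cliqueCount
  have himg : (Finset.univ.filter fun π : Finset V =>
      Γ.IsClique (π : Set V) ∧ π.card = 1 ∧ π ⊆ s) = s.image (fun v => {v}) := by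
    ext π
    simp only [Finset.mem_filter, Finset.mem_univ, true_and, Finset.mem_image]
    constructor
    · rintro ⟨-, hc, hsub⟩
      obtain ⟨v, rfl⟩ := Finset.card_eq_one.mp hc
      exact ⟨v, hsub (Finset.mem_singleton_self v), rfl⟩
    · rintro ⟨v, hv, rfl⟩
      exact ⟨by exact_mod_cast Γ.isClique_singleton v, Finset.card_singleton v,
        Finset.singleton_subset_iff.mpr hv⟩
  rw [himg, Finset.card_image_of_injective _ fun a b h => by
    simpa using h]

lemma count_containing (σ : Finset V) (v : V) (hv : v ∈ graphLink Γ σ) (j : ℕ) :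
    ((Finset.univ.filter fun π : Finset V =>
        Γ.IsClique (π : Set V) ∧ π.card = j + 1 ∧ π ⊆ graphLink Γ σ).filter
      (fun π => v ∈ π)).card
    = cliqueCount Γ j (graphLink Γ (insert v σ)) := by
  rw [mem_graphLink] at hv
  unfold cliqueCount
  refine Finset.card_bij' (fun π _ => π.erase v) (fun τ _ => insert v τ)
    ?_ ?_ ?_ ?_
  · intro π hπ
    simp only [Finset.mem_filter, Finset.mem_univ, true_and] at hπ ⊢
    obtain ⟨⟨hcl, hc, hsub⟩, hvπ⟩ := hπ
    refine ⟨hcl.subset (by exact_mod_cast Finset.erase_subset v π), ?_, ?_⟩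
    · rw [Finset.card_erase_of_mem hvπ, hc]; omega
    · intro w hw
      have hwπ := Finset.mem_of_mem_erase hw
      have hwv : w ≠ v := Finset.ne_of_mem_erase hw
      rw [graphLink_insert, Finset.mem_filter]
      exact ⟨hsub hwπ, hcl (by exact_mod_cast hwπ) (by exact_mod_cast hvπ) hwv⟩
  · intro τ hτ
    simp only [Finset.mem_filter, Finset.mem_univ, true_and] at hτ ⊢
    obtain ⟨hcl, hc, hsub⟩ := hτ
    have hvτ : v ∉ τ := by
      intro h
      have := hsub h
      rw [mem_graphLink] at this
      exact this.1 (Finset.mem_insert_self v σ)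
    have hτlink : ∀ w ∈ τ, w ∈ graphLink Γ σ ∧ Γ.Adj w v := by
      intro w hw
      have := hsub hw
      rw [graphLink_insert, Finset.mem_filter] at this
      exact this
    refine ⟨⟨?_, ?_, ?_⟩, Finset.mem_insert_self v τ⟩
    · rw [Finset.coe_insert]
      refine hcl.insert fun w hw _ => ?_
      exact (hτlink w (by exact_mod_cast hw)).2.symm
    · rw [Finset.card_insert_of_notMem hvτ, hc]
    · intro w hw
      rcases Finset.mem_insert.mp hw with rfl | hwτ
      · rw [mem_graphLink]; exact hv
      · exact (hτlink w hwτ).1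
  · intro π hπ
    simp only [Finset.mem_filter] at hπ
    exact Finset.insert_erase hπ.2
  · intro τ hτ
    simp only [Finset.mem_filter, Finset.mem_univ, true_and] at hτ
    have hvτ : v ∉ τ := by
      intro h
      have := hτ.2.2 h
      rw [mem_graphLink] at this
      exact this.1 (Finset.mem_insert_self v σ)
    exact Finset.erase_insert hvτ

lemma key_identity (σ : Finset V) (j : ℕ) :
    (j + 1) * cliqueCount Γ (j + 1) (graphLink Γ σ)
      = ∑ v ∈ graphLink Γ σ, cliqueCount Γ j (graphLink Γ (insert v σ)) := by
  classical
  set A := Finset.univ.filter fun π : Finset V =>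
    Γ.IsClique (π : Set V) ∧ π.card = j + 1 ∧ π ⊆ graphLink Γ σ with hA
  have h1 : ∑ π ∈ A, π.card = (j + 1) * A.card := by
    rw [Finset.sum_congr rfl (g := fun _ => j + 1) fun π hπ => by
      simp only [hA, Finset.mem_filter, Finset.mem_univ, true_and] at hπ
      exact hπ.2.1]
    rw [Finset.sum_const, smul_eq_mul, mul_comm]
  have h2 : ∑ π ∈ A, π.card
      = ∑ v ∈ graphLink Γ σ, (A.filter (fun π => v ∈ π)).card := by
    have hcards : ∀ π ∈ A, π.card = ∑ v ∈ graphLink Γ σ, if v ∈ π then 1 else 0 := by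
      intro π hπ
      simp only [hA, Finset.mem_filter, Finset.mem_univ, true_and] at hπ
      rw [← Finset.card_filter]
      congr 1
      ext w
      simp only [Finset.mem_filter]
      exact ⟨fun h => ⟨hπ.2.2 h, h⟩, fun h => h.2⟩
    rw [Finset.sum_congr rfl hcards, Finset.sum_comm]
    exact Finset.sum_congr rfl fun v _ => (Finset.card_filter _ _).symm
  have hAc : cliqueCount Γ (j + 1) (graphLink Γ σ) = A.card := rfl
  rw [hAc, ← h1, h2]
  exact Finset.sum_congr rfl fun v hv => count_containing Γ σ v hv j

lemma insert_clique {σ : Finset V} (hσ : Γ.IsClique (σ : Set V)) {v : V}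
    (hv : v ∈ graphLink Γ σ) : Γ.IsClique ((insert v σ : Finset V) : Set V) := by
  rw [mem_graphLink] at hv
  rw [Finset.coe_insert]
  exact hσ.insert fun u hu _ => hv.2 u (by exact_mod_cast hu)

lemma main_aux (hLR : LinkRegular Γ) :
    ∀ j, 1 ≤ j → ∀ σ σ' : Finset V, Γ.IsClique (σ : Set V) → Γ.IsClique (σ' : Set V) →
      σ.card = σ'.card →
      cliqueCount Γ j (graphLink Γ σ) = cliqueCount Γ j (graphLink Γ σ') := by
  intro j
  induction j with
  | zero => omega
  | succ j ih =>
    intro _ σ σ' hσ hσ' hcard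
    by_cases hσe : σ = ∅
    · subst hσe
      have : σ' = ∅ := Finset.card_eq_zero.mp hcard.symm
      subst this
      rfl
    have hσne : σ.Nonempty := Finset.nonempty_iff_ne_empty.mpr hσe
    have hσ'ne : σ'.Nonempty := by
      rw [← Finset.card_pos, ← hcard, Finset.card_pos]; exact hσne
    have hlink : (graphLink Γ σ).card = (graphLink Γ σ').card :=
      hLR σ σ' hσ hσ' hσne hσ'ne hcard
    rcases Nat.eq_zero_or_pos j with rfl | hj1
    · -- j + 1 = 1
      rw [cliqueCount_one, cliqueCount_one, hlink]
    · -- inductive step, j ≥ 1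
      have key := key_identity Γ σ j
      have key' := key_identity Γ σ' j
      rcases Finset.eq_empty_or_nonempty (graphLink Γ σ) with hE | ⟨v0, hv0⟩
      · have hE' : graphLink Γ σ' = ∅ := by
          rw [← Finset.card_eq_zero, ← hlink, Finset.card_eq_zero]; exact hE
        rw [hE] at key; rw [hE'] at key'
        simp only [Finset.sum_empty] at key key'
        have hx : cliqueCount Γ (j + 1) (graphLink Γ σ) = 0 := by
          rcases Nat.mul_eq_zero.mp key with h | h
          · omega
          · rw [hE]; exact h
        have hy : cliqueCount Γ (j + 1) (graphLink Γ σ') = 0 := by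
          rcases Nat.mul_eq_zero.mp key' with h | h
          · omega
          · rw [hE']; exact h
        rw [hx, hy]
      · have hconst : ∀ w ∈ graphLink Γ σ,
            cliqueCount Γ j (graphLink Γ (insert w σ))
              = cliqueCount Γ j (graphLink Γ (insert v0 σ)) := by
          intro w hw
          refine ih hj1 _ _ (insert_clique Γ hσ hw) (insert_clique Γ hσ hv0) ?_
          rw [Finset.card_insert_of_notMem ((mem_graphLink Γ).mp hw).1,
            Finset.card_insert_of_notMem ((mem_graphLink Γ).mp hv0).1]
        have hconst' : ∀ w ∈ graphLink Γ σ',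
            cliqueCount Γ j (graphLink Γ (insert w σ'))
              = cliqueCount Γ j (graphLink Γ (insert v0 σ)) := by
          intro w hw
          refine ih hj1 _ _ (insert_clique Γ hσ' hw) (insert_clique Γ hσ hv0) ?_
          rw [Finset.card_insert_of_notMem ((mem_graphLink Γ).mp hw).1,
            Finset.card_insert_of_notMem ((mem_graphLink Γ).mp hv0).1, hcard]
        rw [Finset.sum_congr rfl hconst, Finset.sum_const, smul_eq_mul] at key
        rw [Finset.sum_congr rfl hconst', Finset.sum_const, smul_eq_mul, ← hlink] at key'
        have := key.trans key'.symm
        exact Nat.eq_of_mul_eq_mul_left (by omega) this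

end Aux

/-- In a link-regular graph, for any two cliques `σ, σ'` of the same size and
any `j ≥ 1`, the number of `j`-cliques contained in `Link(σ)` equals the number
of `j`-cliques contained in `Link(σ')`; i.e. link-regularity implies
K-link-regularity. -/
theorem linkRegular_imp_Klink_regular {V : Type*} [Fintype V] [DecidableEq V]
    (Γ : SimpleGraph V) [DecidableRel Γ.Adj] (hLR : LinkRegular Γ)
    (σ σ' : Finset V) (hσ : Γ.IsClique (σ : Set V)) (hσ' : Γ.IsClique (σ' : Set V))
    (hcard : σ.card = σ'.card) (j : ℕ) (hj : 1 ≤ j) :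
    Nat.card {π : Finset V // Γ.IsClique (π : Set V) ∧ π.card = j ∧ π ⊆ graphLink Γ σ} =
    Nat.card {π : Finset V // Γ.IsClique (π : Set V) ∧ π.card = j ∧ π ⊆ graphLink Γ σ'} := by
  have h := main_aux Γ hLR j hj σ σ' hσ hσ' hcard
  unfold cliqueCount at h
  rw [Nat.card_eq_fintype_card, Nat.card_eq_fintype_card, Fintype.card_subtype,
    Fintype.card_subtype]
  convert h using 2
end
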